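/- arXiv:2307.06269 — 4 statements merged into one kernel-verified Lean document; each statement's English description precedes it below -/
import Mathlib

section
/- For each z ∈ {0,1}, any version ℓ_z of E[A | X, Z=z] satisfies ℓ_z(X) = E[A_z | σ(X)] = P(A_z = 1 | σ(X)) P-almost surely. -/
/-!
On the arm `Z = z` the observed treatment is `A_z`, so `ℓ_z` is a version of `E[A_z 1{Z = z} | X]`
divided by `P(Z = z | X)`. Unconfoundedness makes `E[A_z 1{Z = z} | X] = P(Z = z | X) E[A_z | X]`,
and positivity lets one divide by `P(Z = z | X) ≥ ε`: reweighting a test function `g` by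
`1 / P(Z = z | X)` turns the defining identity of `ℓ_z` into `E[A_z g(X)] = E[ℓ_z(X) g(X)]`.
Since `ℓ_z` need not be bounded, that identity is only available for test functions `g` with
`ℓ_z g` bounded; truncating to `{|ℓ_z| ≤ n}` still identifies `ℓ_z ∘ X` with `E[A_z | σ(X)]`.
-/

open MeasureTheory ProbabilityTheory

lemma ite_eq_one_eq_self_of_zero_or_one {t : ℝ} (ht : t = 0 ∨ t = 1) :
    (if t = 1 then (1 : ℝ) else 0) = t := by
  rcases ht with rfl | rfl <;> norm_num

lemma ite_eq_zero_eq_one_sub_of_zero_or_one {t : ℝ} (ht : t = 0 ∨ t = 1) :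
    (if t = 0 then (1 : ℝ) else 0) = 1 - t := by
  rcases ht with rfl | rfl <;> norm_num

lemma abs_le_one_of_zero_or_one {t : ℝ} (ht : t = 0 ∨ t = 1) : |t| ≤ 1 := by
  rcases ht with rfl | rfl <;> norm_num

lemma exists_abs_div_le_of_le {S : Type*} {g q : S → ℝ} {ε : ℝ} (hε : 0 < ε)
    (hq : ∀ x, ε ≤ q x) (hg : ∃ C, ∀ x, |g x| ≤ C) : ∃ C, ∀ x, |g x / q x| ≤ C := by
  obtain ⟨C, hC⟩ := hg
  refine ⟨C / ε, fun x => ?_⟩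
  rw [abs_div, abs_of_pos (hε.trans_le (hq x))]
  exact div_le_div₀ ((abs_nonneg _).trans (hC x)) (hC x) hε (hq x)

section TestFunctions

variable {Ω S : Type*} [MeasurableSpace Ω] [mS : MeasurableSpace S] {P : Measure Ω} {X : Ω → S}

lemma integrable_of_abs_le [IsFiniteMeasure P] {f : Ω → ℝ} (hf : Measurable f)
    (hfb : ∃ C, ∀ ω, |f ω| ≤ C) : Integrable f P := by
  obtain ⟨C, hC⟩ := hfb
  exact .of_bound hf.aestronglyMeasurable C (ae_of_all _ hC)

lemma integral_mul_indicator_one_comp (hX : Measurable X) {t : Set S} (ht : MeasurableSet t)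
    (F : Ω → ℝ) : ∫ ω, F ω * t.indicator 1 (X ω) ∂P = ∫ ω in X ⁻¹' t, F ω ∂P := by
  rw [← integral_indicator (hX ht)]
  congr 1 with ω
  by_cases h : X ω ∈ t <;> simp [h]

theorem comp_ae_eq_condExp_of_forall_integral_mul_eq [IsFiniteMeasure P] (hX : Measurable X)
    {f : S → ℝ} (hf : Measurable f) {B : Ω → ℝ} (hB : Integrable B P)
    (h : ∀ g : S → ℝ, Measurable g → (∃ C, ∀ x, |g x| ≤ C) → (∃ C, ∀ x, |f x * g x| ≤ C) →
      ∫ ω, B ω * g (X ω) ∂P = ∫ ω, f (X ω) * g (X ω) ∂P) :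
    f ∘ X =ᵐ[P] P[B | mS.comap X] := by
  have hm : mS.comap X ≤ ‹MeasurableSpace Ω› := hX.comap_le
  have on_truncation : ∀ n : ℕ, ∀ᵐ ω ∂P, |f (X ω)| ≤ n → f (X ω) = P[B | mS.comap X] ω := by
    intro n
    set T := {x | |f x| ≤ n}
    have hT : MeasurableSet T := measurableSet_le hf.abs measurable_const
    have hTX : MeasurableSet[mS.comap X] (X ⁻¹' T) := ⟨T, hT, rfl⟩
    have hfT : Measurable[mS.comap X] ((X ⁻¹' T).indicator (f ∘ X)) :=
      (hf.comp (comap_measurable X)).indicator hTX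
    have truncated : (X ⁻¹' T).indicator (f ∘ X) =ᵐ[P] P[(X ⁻¹' T).indicator B | mS.comap X] := by
      refine ae_eq_condExp_of_forall_setIntegral_eq hm (hB.indicator (hm _ hTX))
        (fun s _ _ => ?_) ?_ hfT.aestronglyMeasurable
      · refine (integrable_of_abs_le (hfT.mono hm le_rfl) ⟨n, fun ω => ?_⟩).integrableOn
        by_cases hω : X ω ∈ T
        · rw [Set.indicator_of_mem (show ω ∈ X ⁻¹' T from hω)]
          exact hω
        · simp [Set.indicator_of_notMem (show ω ∉ X ⁻¹' T from hω)]
      · rintro _ ⟨t, ht, rfl⟩ -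
        rw [setIntegral_indicator (hm _ hTX), setIntegral_indicator (hm _ hTX),
          ← Set.preimage_inter, ← integral_mul_indicator_one_comp hX (ht.inter hT) B,
          ← integral_mul_indicator_one_comp hX (ht.inter hT) (f ∘ X)]
        refine (h _ (measurable_one.indicator (ht.inter hT)) ⟨1, fun x => ?_⟩ ⟨n, fun x => ?_⟩).symm
        · by_cases hx : x ∈ t ∩ T <;> simp [hx]
        · by_cases hx : x ∈ t ∩ T
          · rw [Set.indicator_of_mem hx, Pi.one_apply, mul_one]
            exact hx.2
          · simp [hx]
    filter_upwards [truncated, condExp_indicator (m := mS.comap X) hB hTX] with ω h₁ h₂ hω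
    have hωT : ω ∈ X ⁻¹' T := hω
    simpa [Set.indicator_of_mem hωT] using h₁.trans h₂
  filter_upwards [ae_all_iff.2 on_truncation] with ω hω
  exact hω ⌈|f (X ω)|⌉₊ (Nat.le_ceil _)

lemma integral_mul_eq_of_forall_bounded_comp {E : Type*} [MeasurableSpace E] {W B : Ω → ℝ}
    {q : S → ℝ} (V : Ω → E) {π : E → ℝ} (hπ : Measurable π) (hB : ∀ ω, B ω = π (V ω))
    (hBb : ∃ C, ∀ ω, |B ω| ≤ C)
    (h : ∀ ψ : E → ℝ, Measurable ψ → (∃ C, ∀ v, |ψ v| ≤ C) →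
      ∀ g : S → ℝ, Measurable g → (∃ C, ∀ x, |g x| ≤ C) →
        ∫ ω, W ω * ψ (V ω) * g (X ω) ∂P = ∫ ω, q (X ω) * ψ (V ω) * g (X ω) ∂P)
    (g : S → ℝ) (hg : Measurable g) (hgb : ∃ C, ∀ x, |g x| ≤ C) :
    ∫ ω, W ω * B ω * g (X ω) ∂P = ∫ ω, q (X ω) * B ω * g (X ω) ∂P := by
  obtain ⟨C, hC⟩ := hBb
  have hψB : ∀ ω, max (-C) (min C (π (V ω))) = B ω := fun ω => by
    rw [← hB, min_eq_right (abs_le.1 (hC ω)).2, max_eq_right (abs_le.1 (hC ω)).1]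
  have hψb : ∀ v, |max (-C) (min C (π v))| ≤ |C| := fun v =>
    abs_le.2 ⟨(neg_le_neg (le_abs_self C)).trans (le_max_left _ _),
      max_le (neg_le_abs C) ((min_le_left _ _).trans (le_abs_self C))⟩
  simpa only [hψB] using h _ (by fun_prop) ⟨|C|, hψb⟩ g hg hgb

lemma integral_one_sub_mul_eq [IsFiniteMeasure P] (hX : Measurable X) {W V : Ω → ℝ} {q : S → ℝ}
    (hW : Measurable W) (hWb : ∃ C, ∀ ω, |W ω| ≤ C) (hq : Measurable q)
    (hqb : ∃ C, ∀ x, |q x| ≤ C) (hV : Measurable V) (hVb : ∃ C, ∀ ω, |V ω| ≤ C)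
    (h : ∀ g : S → ℝ, Measurable g → (∃ C, ∀ x, |g x| ≤ C) →
      ∫ ω, W ω * V ω * g (X ω) ∂P = ∫ ω, q (X ω) * V ω * g (X ω) ∂P)
    (g : S → ℝ) (hg : Measurable g) (hgb : ∃ C, ∀ x, |g x| ≤ C) :
    ∫ ω, (1 - W ω) * V ω * g (X ω) ∂P = ∫ ω, (1 - q (X ω)) * V ω * g (X ω) ∂P := by
  obtain ⟨CW, hCW⟩ := hWb
  obtain ⟨Cq, hCq⟩ := hqb
  obtain ⟨Cg, hCg⟩ := hgb
  have hgX : AEStronglyMeasurable (fun ω => g (X ω)) P := (hg.comp hX).aestronglyMeasurable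
  have hgXb : ∀ᵐ ω ∂P, ‖g (X ω)‖ ≤ Cg := ae_of_all _ fun ω => hCg (X ω)
  have hVint : Integrable V P := integrable_of_abs_le hV hVb
  have hVg : Integrable (fun ω => V ω * g (X ω)) P := hVint.mul_bdd hgX hgXb
  have hWVg : Integrable (fun ω => W ω * V ω * g (X ω)) P :=
    (hVint.bdd_mul hW.aestronglyMeasurable (ae_of_all _ hCW)).mul_bdd hgX hgXb
  have hqVg : Integrable (fun ω => q (X ω) * V ω * g (X ω)) P :=
    (hVint.bdd_mul (hq.comp hX).aestronglyMeasurable (ae_of_all _ fun ω => hCq (X ω))).mul_bdd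
      hgX hgXb
  simp only [sub_mul, one_mul]
  rw [integral_sub hVg hWVg, integral_sub hVg hqVg, h g hg ⟨Cg, hCg⟩]

theorem comp_ae_eq_condExp_of_version_on_event [IsFiniteMeasure P] (hX : Measurable X)
    {W A B : Ω → ℝ} {q l : S → ℝ} {ε : ℝ} (hε : 0 < ε) (hq : Measurable q) (hqε : ∀ x, ε ≤ q x)
    (hl : Measurable l) (hB : Integrable B P) (hAW : ∀ ω, A ω * W ω = B ω * W ω)
    (hWq : ∀ g : S → ℝ, Measurable g → (∃ C, ∀ x, |g x| ≤ C) →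
      ∫ ω, W ω * g (X ω) ∂P = ∫ ω, q (X ω) * g (X ω) ∂P)
    (hWBq : ∀ g : S → ℝ, Measurable g → (∃ C, ∀ x, |g x| ≤ C) →
      ∫ ω, W ω * B ω * g (X ω) ∂P = ∫ ω, q (X ω) * B ω * g (X ω) ∂P)
    (hlv : ∀ g : S → ℝ, Measurable g → (∃ C, ∀ x, |g x| ≤ C) →
      ∫ ω, A ω * W ω * g (X ω) ∂P = ∫ ω, l (X ω) * W ω * g (X ω) ∂P) :
    l ∘ X =ᵐ[P] P[B | mS.comap X] := by
  refine comp_ae_eq_condExp_of_forall_integral_mul_eq hX hl hB fun g hg hgb hlgb => ?_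
  have hq0 : ∀ x, q x ≠ 0 := fun x => (hε.trans_le (hqε x)).ne'
  have hgq : Measurable fun x => g x / q x := hg.div hq
  have hgqb := exists_abs_div_le_of_le hε hqε hgb
  calc ∫ ω, B ω * g (X ω) ∂P = ∫ ω, q (X ω) * B ω * (g (X ω) / q (X ω)) ∂P := by
        congr 1 with ω; field_simp [hq0 (X ω)]
    _ = ∫ ω, W ω * B ω * (g (X ω) / q (X ω)) ∂P := (hWBq _ hgq hgqb).symm
    _ = ∫ ω, A ω * W ω * (g (X ω) / q (X ω)) ∂P := by
        congr 1 with ω; rw [hAW ω, mul_comm (W ω)]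
    _ = ∫ ω, l (X ω) * W ω * (g (X ω) / q (X ω)) ∂P := hlv _ hgq hgqb
    _ = ∫ ω, W ω * (l (X ω) * g (X ω) / q (X ω)) ∂P := by congr 1 with ω; ring
    _ = ∫ ω, q (X ω) * (l (X ω) * g (X ω) / q (X ω)) ∂P :=
        hWq _ ((hl.mul hg).div hq) (exists_abs_div_le_of_le hε hqε hlgb)
    _ = ∫ ω, l (X ω) * g (X ω) ∂P := by congr 1 with ω; field_simp [hq0 (X ω)]

end TestFunctions

theorem stmt_1_general
    {Ω : Type*} [MeasurableSpace Ω] (P : Measure Ω) [IsProbabilityMeasure P]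
    {S : Type*} [mS : MeasurableSpace S]
    (X : Ω → S) (hX : Measurable X)
    (Z A0 A1 Y0 Y1 : Ω → ℝ)
    (hZ : Measurable Z) (hA0 : Measurable A0) (hA1 : Measurable A1)
    (hZ01 : ∀ ω, Z ω = 0 ∨ Z ω = 1)
    (hA0_01 : ∀ ω, A0 ω = 0 ∨ A0 ω = 1)
    (hA1_01 : ∀ ω, A1 ω = 0 ∨ A1 ω = 1)
    (A : Ω → ℝ)
    (hA : A = fun ω => (1 - Z ω) * A0 ω + Z ω * A1 ω)
    -- positivity: e∘X is a version of E[Z | σ(X)] with ε ≤ e ≤ 1 - ε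
    (e : S → ℝ) (he : Measurable e) (ε : ℝ) (hε : 0 < ε)
    (hebd : ∀ x, ε ≤ e x ∧ e x ≤ 1 - ε)
    (hVe : ∀ g : S → ℝ, Measurable g → (∃ C, ∀ x, |g x| ≤ C) →
      ∫ ω, Z ω * g (X ω) ∂P = ∫ ω, e (X ω) * g (X ω) ∂P)
    -- unconfoundedness: Z ⫫ (A0,A1,Y0,Y1) | σ(X)
    (hUnconf : ∀ ψ : ℝ × ℝ × ℝ × ℝ → ℝ, Measurable ψ → (∃ C, ∀ v, |ψ v| ≤ C) →
      ∀ g : S → ℝ, Measurable g → (∃ C, ∀ x, |g x| ≤ C) →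
      ∫ ω, Z ω * ψ (A0 ω, A1 ω, Y0 ω, Y1 ω) * g (X ω) ∂P
        = ∫ ω, e (X ω) * ψ (A0 ω, A1 ω, Y0 ω, Y1 ω) * g (X ω) ∂P)
    -- ℓ_z is a version of E[A | X, Z = z], for z = 0, 1
    (l0 l1 : S → ℝ) (hl0 : Measurable l0) (hl1 : Measurable l1)
    (hl0v : ∀ g : S → ℝ, Measurable g → (∃ C, ∀ x, |g x| ≤ C) →
      ∫ ω, A ω * (if Z ω = 0 then (1:ℝ) else 0) * g (X ω) ∂P
        = ∫ ω, l0 (X ω) * (if Z ω = 0 then (1:ℝ) else 0) * g (X ω) ∂P)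
    (hl1v : ∀ g : S → ℝ, Measurable g → (∃ C, ∀ x, |g x| ≤ C) →
      ∫ ω, A ω * (if Z ω = 1 then (1:ℝ) else 0) * g (X ω) ∂P
        = ∫ ω, l1 (X ω) * (if Z ω = 1 then (1:ℝ) else 0) * g (X ω) ∂P) :
    (∀ᵐ ω ∂P, l0 (X ω) = (P[A0 | MeasurableSpace.comap X mS]) ω
      ∧ (P[A0 | MeasurableSpace.comap X mS]) ω
        = (P[fun ω' => (if A0 ω' = 1 then (1:ℝ) else 0) | MeasurableSpace.comap X mS]) ω)
    ∧ (∀ᵐ ω ∂P, l1 (X ω) = (P[A1 | MeasurableSpace.comap X mS]) ω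
      ∧ (P[A1 | MeasurableSpace.comap X mS]) ω
        = (P[fun ω' => (if A1 ω' = 1 then (1:ℝ) else 0) | MeasurableSpace.comap X mS]) ω) := by
  have hZb : ∃ C, ∀ ω, |Z ω| ≤ C := ⟨1, fun ω => abs_le_one_of_zero_or_one (hZ01 ω)⟩
  have hA0b : ∃ C, ∀ ω, |A0 ω| ≤ C := ⟨1, fun ω => abs_le_one_of_zero_or_one (hA0_01 ω)⟩
  have hA1b : ∃ C, ∀ ω, |A1 ω| ≤ C := ⟨1, fun ω => abs_le_one_of_zero_or_one (hA1_01 ω)⟩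
  have heb : ∃ C, ∀ x, |e x| ≤ C :=
    ⟨1, fun x => abs_le.2 ⟨by linarith [(hebd x).1], by linarith [(hebd x).2]⟩⟩
  have hZ0 : ∀ ω, (if Z ω = 0 then (1 : ℝ) else 0) = 1 - Z ω :=
    fun ω => ite_eq_zero_eq_one_sub_of_zero_or_one (hZ01 ω)
  have hZ1 : ∀ ω, (if Z ω = 1 then (1 : ℝ) else 0) = Z ω :=
    fun ω => ite_eq_one_eq_self_of_zero_or_one (hZ01 ω)
  have hAZ : ∀ ω, A ω * (1 - Z ω) = A0 ω * (1 - Z ω) ∧ A ω * Z ω = A1 ω * Z ω := fun ω => by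
    rcases hZ01 ω with h | h <;> simp [hA, h]
  have hZA0 := integral_mul_eq_of_forall_bounded_comp (B := A0) (π := fun v => v.1)
    (fun ω => (A0 ω, A1 ω, Y0 ω, Y1 ω)) (by fun_prop) (fun _ => rfl) hA0b hUnconf
  have hZA1 := integral_mul_eq_of_forall_bounded_comp (B := A1) (π := fun v => v.2.1)
    (fun ω => (A0 ω, A1 ω, Y0 ω, Y1 ω)) (by fun_prop) (fun _ => rfl) hA1b hUnconf
  have hVe0 : ∀ g : S → ℝ, Measurable g → (∃ C, ∀ x, |g x| ≤ C) →
      ∫ ω, (1 - Z ω) * g (X ω) ∂P = ∫ ω, (1 - e (X ω)) * g (X ω) ∂P := by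
    simpa only [mul_one] using integral_one_sub_mul_eq (V := fun _ => 1) hX hZ hZb he heb
      measurable_const ⟨1, by simp⟩ (by simpa only [mul_one] using hVe)
  have arm0 : l0 ∘ X =ᵐ[P] P[A0 | mS.comap X] :=
    comp_ae_eq_condExp_of_version_on_event (W := fun ω => 1 - Z ω) (q := fun x => 1 - e x)
      hX hε (measurable_const.sub he) (fun x => by linarith [(hebd x).2]) hl0
      (integrable_of_abs_le hA0 hA0b) (fun ω => (hAZ ω).1) hVe0
      (integral_one_sub_mul_eq hX hZ hZb he heb hA0 hA0b hZA0) (by simpa only [hZ0] using hl0v)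
  have arm1 : l1 ∘ X =ᵐ[P] P[A1 | mS.comap X] :=
    comp_ae_eq_condExp_of_version_on_event hX hε he (fun x => (hebd x).1) hl1
      (integrable_of_abs_le hA1 hA1b) (fun ω => (hAZ ω).2) hVe hZA1 (by simpa only [hZ1] using hl1v)
  rw [funext fun ω => ite_eq_one_eq_self_of_zero_or_one (hA0_01 ω),
    funext fun ω => ite_eq_one_eq_self_of_zero_or_one (hA1_01 ω)]
  exact ⟨arm0.mono fun ω h => ⟨h, rfl⟩, arm1.mono fun ω h => ⟨h, rfl⟩⟩

/-- For each z ∈ {0,1}, any version ℓ_z of E[A | X, Z=z] satisfies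
ℓ_z(X) = E[A_z | σ(X)] = P(A_z = 1 | σ(X)) P-almost surely. -/
theorem stmt_1
    {Ω : Type*} [MeasurableSpace Ω] (P : Measure Ω) [IsProbabilityMeasure P]
    {S : Type*} [mS : MeasurableSpace S]
    (X : Ω → S) (hX : Measurable X)
    (Z A0 A1 Y0 Y1 : Ω → ℝ)
    (hZ : Measurable Z) (hA0 : Measurable A0) (hA1 : Measurable A1)
    (hY0 : Measurable Y0) (hY1 : Measurable Y1)
    (hZ01 : ∀ ω, Z ω = 0 ∨ Z ω = 1)
    (hA0_01 : ∀ ω, A0 ω = 0 ∨ A0 ω = 1)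
    (hA1_01 : ∀ ω, A1 ω = 0 ∨ A1 ω = 1)
    (hY0b : ∃ C, ∀ ω, |Y0 ω| ≤ C) (hY1b : ∃ C, ∀ ω, |Y1 ω| ≤ C)
    (A Y : Ω → ℝ)
    (hA : A = fun ω => (1 - Z ω) * A0 ω + Z ω * A1 ω)
    (hY : Y = fun ω => (1 - A ω) * Y0 ω + A ω * Y1 ω)
    -- positivity: e∘X is a version of E[Z | σ(X)] with ε ≤ e ≤ 1 - ε
    (e : S → ℝ) (he : Measurable e) (ε : ℝ) (hε : 0 < ε) (hε2 : ε < 1/2)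
    (hebd : ∀ x, ε ≤ e x ∧ e x ≤ 1 - ε)
    (hVe : ∀ g : S → ℝ, Measurable g → (∃ C, ∀ x, |g x| ≤ C) →
      ∫ ω, Z ω * g (X ω) ∂P = ∫ ω, e (X ω) * g (X ω) ∂P)
    -- unconfoundedness: Z ⫫ (A0,A1,Y0,Y1) | σ(X)
    (hUnconf : ∀ ψ : ℝ × ℝ × ℝ × ℝ → ℝ, Measurable ψ → (∃ C, ∀ v, |ψ v| ≤ C) →
      ∀ g : S → ℝ, Measurable g → (∃ C, ∀ x, |g x| ≤ C) →
      ∫ ω, Z ω * ψ (A0 ω, A1 ω, Y0 ω, Y1 ω) * g (X ω) ∂P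
        = ∫ ω, e (X ω) * ψ (A0 ω, A1 ω, Y0 ω, Y1 ω) * g (X ω) ∂P)
    -- ℓ_z is a version of E[A | X, Z = z], for z = 0, 1
    (l0 l1 : S → ℝ) (hl0 : Measurable l0) (hl1 : Measurable l1)
    (hl0v : ∀ g : S → ℝ, Measurable g → (∃ C, ∀ x, |g x| ≤ C) →
      ∫ ω, A ω * (if Z ω = 0 then (1:ℝ) else 0) * g (X ω) ∂P
        = ∫ ω, l0 (X ω) * (if Z ω = 0 then (1:ℝ) else 0) * g (X ω) ∂P)
    (hl1v : ∀ g : S → ℝ, Measurable g → (∃ C, ∀ x, |g x| ≤ C) →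
      ∫ ω, A ω * (if Z ω = 1 then (1:ℝ) else 0) * g (X ω) ∂P
        = ∫ ω, l1 (X ω) * (if Z ω = 1 then (1:ℝ) else 0) * g (X ω) ∂P) :
    (∀ᵐ ω ∂P, l0 (X ω) = (P[A0 | MeasurableSpace.comap X mS]) ω
      ∧ (P[A0 | MeasurableSpace.comap X mS]) ω
        = (P[fun ω' => (if A0 ω' = 1 then (1:ℝ) else 0) | MeasurableSpace.comap X mS]) ω)
    ∧ (∀ᵐ ω ∂P, l1 (X ω) = (P[A1 | MeasurableSpace.comap X mS]) ω
      ∧ (P[A1 | MeasurableSpace.comap X mS]) ω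
        = (P[fun ω' => (if A1 ω' = 1 then (1:ℝ) else 0) | MeasurableSpace.comap X mS]) ω) :=
  stmt_1_general P (mS := mS) X hX Z A0 A1 Y0 Y1 hZ hA0 hA1 hZ01 hA0_01 hA1_01 A hA e he ε hε hebd
    hVe hUnconf l0 l1 hl0 hl1 hl0v hl1v
end

section
/- (Identification of the local average treatment effect, Lemma 1.) Under unconfoundedness, positivity, monotonicity, and relevance, the IV estimand equals the average treatment effect among compliers: χ0 := Γ0 / Δ0 = E[Y1 − Y0 | A1 > A0], where Γ0 := E[m1(X) − m0(X)], Δ0 := E[ℓ1(X) − ℓ0(X)], and the right-hand side is the conditional expectation of Y1 − Y0 given the event {A1 = 1, A0 = 0}, which has positive probability. -/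
/-!
On the arm `{Z = z}` the version `m_z(X)` of `E[Y | X, Z = z]` need not be bounded a priori, but it
is a.e. bounded: testing it against `1{c < m_z} / (1 + |m_z|)` shows that `{c < m_z(X)}` misses
`{Z = z}` up to a null set, and positivity of the propensity score transfers that null set to all
of `Ω`. Inverse propensity weighting and unconfoundedness then give `E[m_z(X)] = E[Y_{A_z}]` and
`E[ℓ_z(X)] = E[A_z]`. Under monotonicity `A1 - A0` is the indicator of the compliers, so
`Γ0 = E[(Y1 - Y0); A1 > A0]` and `Δ0 = P(A1 > A0)`.
-/

open MeasureTheory Set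

lemma abs_max_neg_min_le (c x : ℝ) : |max (-c) (min x c)| ≤ |c| :=
  abs_le.2 ⟨(neg_le_neg (le_abs_self c)).trans (le_max_left _ _),
    max_le (neg_le_abs c) ((min_le_right _ _).trans (le_abs_self c))⟩

lemma max_neg_min_eq_self {c x : ℝ} (h : |x| ≤ c) : max (-c) (min x c) = x := by
  rw [min_eq_left (abs_le.1 h).2, max_eq_right (abs_le.1 h).1]

lemma exists_abs_mul_le {α : Type*} {f g : α → ℝ} (hf : ∃ C, ∀ x, |f x| ≤ C)
    (hg : ∃ C, ∀ x, |g x| ≤ C) : ∃ C, ∀ x, |f x * g x| ≤ C := by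
  obtain ⟨C, hC⟩ := hf
  obtain ⟨D, hD⟩ := hg
  exact ⟨C * D, fun x => by
    rw [abs_mul]; exact mul_le_mul (hC x) (hD x) (abs_nonneg _) ((abs_nonneg _).trans (hC x))⟩

lemma integrable_of_abs_le_s5 {α : Type*} [MeasurableSpace α] {μ : Measure α} [IsFiniteMeasure μ]
    {f : α → ℝ} (hf : Measurable f) {C : ℝ} (hC : ∀ x, |f x| ≤ C) : Integrable f μ :=
  Integrable.of_bound hf.aestronglyMeasurable C (ae_of_all _ hC)

lemma exists_abs_inv_le {α : Type*} {d : α → ℝ} {ε : ℝ} (hε : 0 < ε) (hdε : ∀ x, ε ≤ d x) :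
    ∃ C, ∀ x, |(d x)⁻¹| ≤ C :=
  ⟨ε⁻¹, fun x => by
    rw [abs_inv, abs_of_pos (hε.trans_le (hdε x))]; exact inv_anti₀ hε (hdε x)⟩

lemma abs_potential_outcome_le {a y₀ y₁ C₀ C₁ : ℝ} (ha : a = 0 ∨ a = 1) (h₀ : |y₀| ≤ C₀)
    (h₁ : |y₁| ≤ C₁) : |(1 - a) * y₀ + a * y₁| ≤ max C₀ C₁ := by
  rcases ha with rfl | rfl <;> simp [h₀, h₁]

lemma exists_weight_pos_iff_lt {S : Type*} [MeasurableSpace S] {m : S → ℝ} (hm : Measurable m)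
    (c : ℝ) : ∃ g : S → ℝ, Measurable g ∧ (∀ x, 0 ≤ g x ∧ g x ≤ 1 ∧ |m x * g x| ≤ 1) ∧
      ∀ x, 0 < g x ↔ c < m x := by
  refine ⟨{x | c < m x}.indicator fun x => (1 + |m x|)⁻¹,
    (measurable_const.add hm.abs).inv.indicator (measurableSet_lt measurable_const hm),
    fun x => ?_, fun x => ?_⟩ <;> by_cases hx : c < m x
  · have h1 : 0 < 1 + |m x| := by positivity
    simp only [indicator_of_mem (show x ∈ {x | c < m x} from hx)]
    refine ⟨by positivity, inv_le_one_of_one_le₀ (le_add_of_nonneg_right (abs_nonneg _)), ?_⟩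
    rw [abs_mul, abs_inv, abs_of_pos h1, ← div_eq_mul_inv, div_le_one h1]
    linarith
  · simp [hx]
  · simp only [indicator_of_mem (show x ∈ {x | c < m x} from hx), hx, iff_true]; positivity
  · simp [hx]

section CondExp

variable {Ω S T : Type*} [MeasurableSpace Ω] [MeasurableSpace S] [MeasurableSpace T]
  {P : Measure Ω} {X : Ω → S}

/-- `E[u | X] = E[v | X]`, stated weakly by testing against bounded measurable functions of `X`
(so that neither `u` nor `v` needs to be integrable). -/
def SameCondExp (P : Measure Ω) (X : Ω → S) (u v : Ω → ℝ) : Prop :=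
  ∀ g : S → ℝ, Measurable g → (∃ C, ∀ x, |g x| ≤ C) →
    ∫ ω, u ω * g (X ω) ∂P = ∫ ω, v ω * g (X ω) ∂P

/-- `ζ` is independent of `U` given `X`, with `E[ζ | X] = d(X)`. -/
def Unconfounded (P : Measure Ω) (X : Ω → S) (U : Ω → T) (ζ : Ω → ℝ) (d : S → ℝ) : Prop :=
  ∀ ψ : T → ℝ, Measurable ψ → (∃ C, ∀ v, |ψ v| ≤ C) →
    SameCondExp P X (fun ω => ζ ω * ψ (U ω)) (fun ω => d (X ω) * ψ (U ω))

namespace SameCondExp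

variable {u v u' v' : Ω → ℝ}

lemma congr (h : SameCondExp P X u v) (hu : ∀ ω, u ω = u' ω) (hv : ∀ ω, v ω = v' ω) :
    SameCondExp P X u' v' := by
  rwa [← funext hu, ← funext hv]

lemma neg (h : SameCondExp P X u v) : SameCondExp P X (fun ω => -u ω) (fun ω => -v ω) :=
  fun g hg hgC => by simpa only [neg_mul, integral_neg, neg_inj] using h g hg hgC

lemma sub (hX : Measurable X) (h : SameCondExp P X u v) (h' : SameCondExp P X u' v')
    (hu : Integrable u P) (hv : Integrable v P) (hu' : Integrable u' P) (hv' : Integrable v' P) :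
    SameCondExp P X (fun ω => u ω - u' ω) (fun ω => v ω - v' ω) := by
  intro g hg ⟨C, hC⟩
  have hint : ∀ w : Ω → ℝ, Integrable w P → Integrable (fun ω => w ω * g (X ω)) P :=
    fun w hw => hw.mul_bdd (hg.comp hX).aestronglyMeasurable (ae_of_all _ fun ω => hC (X ω))
  simp only [sub_mul]
  rw [integral_sub (hint u hu) (hint u' hu'), integral_sub (hint v hv) (hint v' hv'),
    h g hg ⟨C, hC⟩, h' g hg ⟨C, hC⟩]

lemma mul_comp (h : SameCondExp P X u v) {f : S → ℝ} (hf : Measurable f)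
    (hfC : ∃ C, ∀ x, |f x| ≤ C) :
    SameCondExp P X (fun ω => u ω * f (X ω)) (fun ω => v ω * f (X ω)) :=
  fun g hg hgC => by
    simpa only [mul_assoc] using h (fun x => f x * g x) (hf.mul hg) (exists_abs_mul_le hfC hgC)

variable {ζ V : Ω → ℝ} {d : S → ℝ} {ε : ℝ}

/-- Inverse propensity weighting. -/
lemma integral_eq_integral_div (hd : Measurable d) (hε : 0 < ε) (hdε : ∀ x, ε ≤ d x)
    (h : SameCondExp P X (fun ω => ζ ω * V ω) (fun ω => d (X ω) * V ω)) :
    ∫ ω, V ω ∂P = ∫ ω, ζ ω * V ω / d (X ω) ∂P := by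
  have key := h (fun x => (d x)⁻¹) hd.inv (exists_abs_inv_le hε hdε)
  simp only [← div_eq_mul_inv] at key
  rw [key]
  exact integral_congr_ae (ae_of_all _ fun ω => by field_simp [(hε.trans_le (hdε (X ω))).ne'])

end SameCondExp

variable {ζ V W : Ω → ℝ} {d m : S → ℝ} {ε c : ℝ}

lemma measure_preimage_eq_zero_of_sameCondExp [IsFiniteMeasure P] (hX : Measurable X)
    (hd : Measurable d) (hε : 0 < ε) (hdε : ∀ x, ε ≤ d x)
    (hζd : SameCondExp P X ζ (fun ω => d (X ω))) {s : Set S} (hs : MeasurableSet s)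
    (hζs : ∀ᵐ ω ∂P, X ω ∈ s → ζ ω = 0) :
    P (X ⁻¹' s) = 0 := by
  have hind := (hζd.mul_comp (measurable_one.indicator hs) ⟨1, fun x => by
    by_cases hx : x ∈ s <;> simp [hx]⟩).integral_eq_integral_div hd hε hdε
  have hzero : ∫ ω, ζ ω * s.indicator 1 (X ω) / d (X ω) ∂P = 0 :=
    integral_eq_zero_of_ae (hζs.mono fun ω h => by by_cases hx : X ω ∈ s <;> simp [hx, h])
  change ∫ ω, (X ⁻¹' s).indicator 1 ω ∂P = _ at hind
  rw [hzero, integral_indicator_one (hX hs)] at hind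
  exact (measureReal_eq_zero_iff).1 hind

lemma ae_eq_zero_of_lt_comp [IsFiniteMeasure P] (hX : Measurable X)
    (hζ : Measurable ζ) (hζ01 : ∀ ω, ζ ω ∈ Icc (0 : ℝ) 1) (hV : Measurable V)
    (hVc : ∀ ω, |V ω| ≤ c) (hm : Measurable m)
    (hmV : SameCondExp P X (fun ω => V ω * ζ ω) (fun ω => m (X ω) * ζ ω)) :
    ∀ᵐ ω ∂P, c < m (X ω) → ζ ω = 0 := by
  obtain ⟨g, hg, hg_bd, hg_pos⟩ := exists_weight_pos_iff_lt hm c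
  have hgX : Measurable fun ω => g (X ω) := hg.comp hX
  have hg_abs : ∀ x, |g x| ≤ 1 := fun x => abs_le.2 ⟨by linarith [(hg_bd x).1], (hg_bd x).2.1⟩
  have hζ0 : ∀ ω, 0 ≤ ζ ω := fun ω => (hζ01 ω).1
  have hζ1 : ∀ ω, |ζ ω| ≤ 1 := fun ω => abs_le.2 ⟨by linarith [(hζ01 ω).1], (hζ01 ω).2⟩
  have hint : ∀ w : Ω → ℝ, Measurable w → (∀ ω, |w ω| ≤ |c|) →
      Integrable (fun ω => w ω * ζ ω * g (X ω)) P := fun w hw hwc => by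
    obtain ⟨C, hC⟩ := exists_abs_mul_le (exists_abs_mul_le ⟨_, hwc⟩ ⟨1, hζ1⟩) ⟨1, fun ω => hg_abs _⟩
    exact integrable_of_abs_le_s5 ((hw.mul hζ).mul hgX) hC
  have hVζg := hint V hV fun ω => (hVc ω).trans (le_abs_self c)
  have hcζg := hint (fun _ => c) measurable_const fun _ => le_rfl
  have hmζg : Integrable (fun ω => m (X ω) * ζ ω * g (X ω)) P :=
    integrable_of_abs_le_s5 (((hm.comp hX).mul hζ).mul hgX) (C := 1) fun ω => by
        rw [mul_right_comm, abs_mul]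
        nlinarith [(hg_bd (X ω)).2.2, hζ1 ω, abs_nonneg (ζ ω), abs_nonneg (m (X ω) * g (X ω))]
  set F : Ω → ℝ := fun ω => (m (X ω) - c) * ζ ω * g (X ω)
  have hF_eq : F = fun ω => m (X ω) * ζ ω * g (X ω) - c * ζ ω * g (X ω) :=
    funext fun ω => by ring
  have hF_nonneg : 0 ≤ F := fun ω => by
    by_cases hx : c < m (X ω)
    · exact mul_nonneg (mul_nonneg (by linarith) (hζ0 ω)) (hg_bd _).1
    · simp [F, le_antisymm (not_lt.1 (mt (hg_pos _).1 hx)) (hg_bd _).1]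
  have hF_le : ∫ ω, F ω ∂P ≤ 0 := calc
    ∫ ω, F ω ∂P = ∫ ω, m (X ω) * ζ ω * g (X ω) ∂P - ∫ ω, c * ζ ω * g (X ω) ∂P := by
      rw [hF_eq, integral_sub hmζg hcζg]
    _ = ∫ ω, (V ω * ζ ω * g (X ω) - c * ζ ω * g (X ω)) ∂P := by
      rw [← hmV g hg ⟨1, hg_abs⟩, integral_sub hVζg hcζg]
    _ ≤ 0 := integral_nonpos fun ω => by
      have := mul_nonneg (sub_nonneg.2 ((le_abs_self (V ω)).trans (hVc ω)))
        (mul_nonneg (hζ0 ω) (hg_bd (X ω)).1)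
      simp only [Pi.zero_apply]; linarith
  have hF_zero : F =ᵐ[P] 0 := (integral_eq_zero_iff_of_nonneg hF_nonneg
    (hF_eq ▸ hmζg.sub hcζg)).1 (le_antisymm hF_le (integral_nonneg hF_nonneg))
  filter_upwards [hF_zero] with ω hω hlt
  have := mul_pos (sub_pos.2 hlt) ((hg_pos _).2 hlt)
  simp only [F, Pi.zero_apply] at hω
  nlinarith [hζ0 ω]

lemma ae_comp_le_of_sameCondExp [IsFiniteMeasure P] (hX : Measurable X)
    (hζ : Measurable ζ) (hζ01 : ∀ ω, ζ ω ∈ Icc (0 : ℝ) 1)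
    (hd : Measurable d) (hε : 0 < ε) (hdε : ∀ x, ε ≤ d x)
    (hζd : SameCondExp P X ζ (fun ω => d (X ω))) (hV : Measurable V)
    (hVc : ∀ ω, |V ω| ≤ c) (hm : Measurable m)
    (hmV : SameCondExp P X (fun ω => V ω * ζ ω) (fun ω => m (X ω) * ζ ω)) :
    ∀ᵐ ω ∂P, m (X ω) ≤ c := by
  have hnull := measure_preimage_eq_zero_of_sameCondExp hX hd hε hdε hζd
    (measurableSet_lt measurable_const hm) (ae_eq_zero_of_lt_comp hX hζ hζ01 hV hVc hm hmV)
  filter_upwards [measure_eq_zero_iff_ae_notMem.1 hnull] with ω h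
  exact not_lt.1 h

lemma ae_abs_comp_le_of_sameCondExp [IsFiniteMeasure P] (hX : Measurable X)
    (hζ : Measurable ζ) (hζ01 : ∀ ω, ζ ω ∈ Icc (0 : ℝ) 1)
    (hd : Measurable d) (hε : 0 < ε) (hdε : ∀ x, ε ≤ d x)
    (hζd : SameCondExp P X ζ (fun ω => d (X ω))) (hV : Measurable V)
    (hVc : ∀ ω, |V ω| ≤ c) (hm : Measurable m)
    (hmV : SameCondExp P X (fun ω => V ω * ζ ω) (fun ω => m (X ω) * ζ ω)) :
    ∀ᵐ ω ∂P, |m (X ω)| ≤ c := by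
  have upper := ae_comp_le_of_sameCondExp hX hζ hζ01 hd hε hdε hζd hV hVc hm hmV
  have lower := ae_comp_le_of_sameCondExp (V := fun ω => -V ω) (m := fun x => -m x)
    hX hζ hζ01 hd hε hdε hζd hV.neg (fun ω => (abs_neg (V ω)).trans_le (hVc ω)) hm.neg
    (hmV.neg.congr (fun ω => (neg_mul _ _).symm) fun ω => (neg_mul _ _).symm)
  filter_upwards [upper, lower] with ω h1 h2
  exact abs_le.2 ⟨by linarith, h1⟩

lemma integral_comp_eq_of_sameCondExp [IsFiniteMeasure P] (hX : Measurable X)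
    (hζ : Measurable ζ) (hζ01 : ∀ ω, ζ ω ∈ Icc (0 : ℝ) 1)
    (hd : Measurable d) (hε : 0 < ε) (hdε : ∀ x, ε ≤ d x)
    (hζd : SameCondExp P X ζ (fun ω => d (X ω)))
    (hVd : SameCondExp P X (fun ω => ζ ω * V ω) (fun ω => d (X ω) * V ω))
    (hV : Measurable V) (hVc : ∀ ω, |V ω| ≤ c) (hm : Measurable m)
    (hmV : SameCondExp P X (fun ω => V ω * ζ ω) (fun ω => m (X ω) * ζ ω)) :
    Integrable (fun ω => m (X ω)) P ∧ ∫ ω, m (X ω) ∂P = ∫ ω, V ω ∂P := by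
  have hbdd := ae_abs_comp_le_of_sameCondExp hX hζ hζ01 hd hε hdε hζd hV hVc hm hmV
  set m' : S → ℝ := fun x => max (-c) (min (m x) c)
  have hm' : Measurable m' := measurable_const.max (hm.min measurable_const)
  have hm'_ae : (fun ω => m' (X ω)) =ᵐ[P] fun ω => m (X ω) :=
    hbdd.mono fun ω h => max_neg_min_eq_self h
  refine ⟨(integrable_of_abs_le_s5 (hm'.comp hX) fun ω => abs_max_neg_min_le c _).congr hm'_ae, ?_⟩
  calc ∫ ω, m (X ω) ∂P
      = ∫ ω, m' (X ω) ∂P := integral_congr_ae hm'_ae.symm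
    _ = ∫ ω, ζ ω * m' (X ω) / d (X ω) ∂P :=
      (hζd.mul_comp hm' ⟨|c|, fun x => abs_max_neg_min_le c _⟩).integral_eq_integral_div
        hd hε hdε
    _ = ∫ ω, m (X ω) * ζ ω * (d (X ω))⁻¹ ∂P :=
      integral_congr_ae (hm'_ae.mono fun ω (h : m' (X ω) = m (X ω)) => by
        simp only [h, div_eq_mul_inv, mul_comm (ζ ω)])
    _ = ∫ ω, ζ ω * V ω / d (X ω) ∂P := by
      rw [← hmV (fun x => (d x)⁻¹) hd.inv (exists_abs_inv_le hε hdε)]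
      exact integral_congr_ae (ae_of_all _ fun ω => by ring)
    _ = ∫ ω, V ω ∂P := (hVd.integral_eq_integral_div hd hε hdε).symm

namespace Unconfounded

variable {U : Ω → T}

lemma sameCondExp (hU : Unconfounded P X U ζ d) : SameCondExp P X ζ (fun ω => d (X ω)) :=
  (hU (fun _ => 1) measurable_const ⟨1, fun _ => abs_one.le⟩).congr
    (fun _ => mul_one _) (fun _ => mul_one _)

lemma sameCondExp_comp (hU : Unconfounded P X U ζ d) {φ : T → ℝ} (hφ : Measurable φ)
    (hφc : ∀ ω, |φ (U ω)| ≤ c) :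
    SameCondExp P X (fun ω => ζ ω * φ (U ω)) (fun ω => d (X ω) * φ (U ω)) := by
  have key : ∀ ω, max (-c) (min (φ (U ω)) c) = φ (U ω) := fun ω => max_neg_min_eq_self (hφc ω)
  simpa only [key] using hU (fun v => max (-c) (min (φ v) c))
    (measurable_const.max (hφ.min measurable_const)) ⟨|c|, fun v => abs_max_neg_min_le c _⟩

lemma one_sub [IsFiniteMeasure P] (hX : Measurable X) (hUm : Measurable U)
    (hU : Unconfounded P X U ζ d) (hζ : Measurable ζ) (hζ1 : ∀ ω, |ζ ω| ≤ 1)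
    (hd : Measurable d) (hd1 : ∀ x, |d x| ≤ 1) :
    Unconfounded P X U (fun ω => 1 - ζ ω) (fun x => 1 - d x) := by
  intro ψ hψ ⟨C, hC⟩
  have hψU : Integrable (fun ω => ψ (U ω)) P :=
    integrable_of_abs_le_s5 (hψ.comp hUm) fun ω => hC _
  have hrefl : SameCondExp P X (fun ω => ψ (U ω)) (fun ω => ψ (U ω)) := fun _ _ _ => rfl
  exact (hrefl.sub hX (hU ψ hψ ⟨C, hC⟩) hψU hψU
    (hψU.bdd_mul hζ.aestronglyMeasurable (ae_of_all _ hζ1))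
    (hψU.bdd_mul (hd.comp hX).aestronglyMeasurable (ae_of_all _ fun ω => hd1 _))).congr
    (fun ω => by ring) (fun ω => by ring)

lemma ite_eq_one (hζ01 : ∀ ω, ζ ω = 0 ∨ ζ ω = 1) (hU : Unconfounded P X U ζ d) :
    Unconfounded P X U (fun ω => if ζ ω = 1 then 1 else 0) d :=
  (funext fun ω => by rcases hζ01 ω with h | h <;> simp [h] :
    ζ = fun ω => if ζ ω = 1 then 1 else 0) ▸ hU

lemma ite_eq_zero [IsFiniteMeasure P] (hX : Measurable X) (hUm : Measurable U)
    (hU : Unconfounded P X U ζ d) (hζ : Measurable ζ) (hζ01 : ∀ ω, ζ ω = 0 ∨ ζ ω = 1)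
    (hd : Measurable d) (hd1 : ∀ x, |d x| ≤ 1) :
    Unconfounded P X U (fun ω => if ζ ω = 0 then 1 else 0) (fun x => 1 - d x) :=
  (funext fun ω => by rcases hζ01 ω with h | h <;> simp [h] :
    (fun ω => 1 - ζ ω) = fun ω => if ζ ω = 0 then 1 else 0) ▸
  hU.one_sub hX hUm hζ (fun ω => by rcases hζ01 ω with h | h <;> simp [h]) hd hd1

lemma integral_comp_eq [IsFiniteMeasure P] (hX : Measurable X) (hUm : Measurable U)
    (hU : Unconfounded P X U ζ d) (hζ : Measurable ζ) (hζ01 : ∀ ω, ζ ω ∈ Icc (0 : ℝ) 1)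
    (hd : Measurable d) (hε : 0 < ε) (hdε : ∀ x, ε ≤ d x)
    {φ : T → ℝ} (hφ : Measurable φ) (hφc : ∀ ω, |φ (U ω)| ≤ c)
    (hWφ : ∀ ω, W ω * ζ ω = φ (U ω) * ζ ω) (hm : Measurable m)
    (hmW : SameCondExp P X (fun ω => W ω * ζ ω) (fun ω => m (X ω) * ζ ω)) :
    Integrable (fun ω => m (X ω)) P ∧ ∫ ω, m (X ω) ∂P = ∫ ω, φ (U ω) ∂P :=
  integral_comp_eq_of_sameCondExp hX hζ hζ01 hd hε hdε hU.sameCondExp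
    (hU.sameCondExp_comp hφ hφc) (hφ.comp hUm) hφc hm (hmW.congr hWφ fun _ => rfl)

end Unconfounded

end CondExp

section Compliers

variable {Ω : Type*} [MeasurableSpace Ω] {P : Measure Ω} {A0 A1 Y0 Y1 : Ω → ℝ} {C₀ C₁ : ℝ}

lemma ae_sub_mul_eq_indicator (hA0 : ∀ ω, A0 ω = 0 ∨ A0 ω = 1)
    (hA1 : ∀ ω, A1 ω = 0 ∨ A1 ω = 1) (hmono : ∀ᵐ ω ∂P, A0 ω ≤ A1 ω) (f : Ω → ℝ) :
    ∀ᵐ ω ∂P, (A1 ω - A0 ω) * f ω = {ω | A1 ω = 1 ∧ A0 ω = 0}.indicator f ω := by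
  filter_upwards [hmono] with ω h
  rcases hA0 ω with h0 | h0 <;> rcases hA1 ω with h1 | h1 <;>
    simp_all [show ¬(1 : ℝ) ≤ 0 by norm_num]

lemma measure_compliers_pos (hA0 : ∀ ω, A0 ω = 0 ∨ A0 ω = 1)
    (hA1 : ∀ ω, A1 ω = 0 ∨ A1 ω = 1) (hmono : ∀ᵐ ω ∂P, A0 ω ≤ A1 ω)
    (hrel : 0 < P {ω | A1 ω ≠ A0 ω}) : 0 < P {ω | A1 ω = 1 ∧ A0 ω = 0} :=
  hrel.trans_le <| measure_mono_ae <| hmono.mono fun ω h (hne : A1 ω ≠ A0 ω) =>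
    show ω ∈ {ω | A1 ω = 1 ∧ A0 ω = 0} by
      rcases hA0 ω with h0 | h0 <;> rcases hA1 ω with h1 | h1 <;>
        simp_all [show ¬(1 : ℝ) ≤ 0 by norm_num]

lemma integral_potential_sub_div_eq_setIntegral_div [IsFiniteMeasure P] (hA0 : Measurable A0)
    (hA1 : Measurable A1) (hY0 : Measurable Y0) (hY1 : Measurable Y1) (hC₀ : ∀ ω, |Y0 ω| ≤ C₀)
    (hC₁ : ∀ ω, |Y1 ω| ≤ C₁) (hA0_01 : ∀ ω, A0 ω = 0 ∨ A0 ω = 1)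
    (hA1_01 : ∀ ω, A1 ω = 0 ∨ A1 ω = 1) (hmono : ∀ᵐ ω ∂P, A0 ω ≤ A1 ω) :
    (∫ ω, ((1 - A1 ω) * Y0 ω + A1 ω * Y1 ω) ∂P - ∫ ω, ((1 - A0 ω) * Y0 ω + A0 ω * Y1 ω) ∂P)
        / (∫ ω, A1 ω ∂P - ∫ ω, A0 ω ∂P)
      = (∫ ω in {ω | A1 ω = 1 ∧ A0 ω = 0}, (Y1 ω - Y0 ω) ∂P)
        / P.real {ω | A1 ω = 1 ∧ A0 ω = 0} := by
  have hC : MeasurableSet {ω | A1 ω = 1 ∧ A0 ω = 0} :=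
    (measurableSet_eq_fun hA1 measurable_const).inter (measurableSet_eq_fun hA0 measurable_const)
  have hVint : ∀ f : Ω → ℝ, Measurable f → (∀ ω, f ω = 0 ∨ f ω = 1) →
      Integrable (fun ω => (1 - f ω) * Y0 ω + f ω * Y1 ω) P := fun f hf hf01 =>
    integrable_of_abs_le_s5 (by fun_prop) fun ω => abs_potential_outcome_le (hf01 ω) (hC₀ ω) (hC₁ ω)
  have hAint : ∀ f : Ω → ℝ, Measurable f → (∀ ω, f ω = 0 ∨ f ω = 1) → Integrable f P :=
    fun f hf hf01 => integrable_of_abs_le_s5 hf (C := 1) fun ω => by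
      rcases hf01 ω with h | h <;> simp [h]
  rw [← integral_sub (hVint A1 hA1 hA1_01) (hVint A0 hA0 hA0_01),
    ← integral_sub (hAint A1 hA1 hA1_01) (hAint A0 hA0 hA0_01),
    ← integral_indicator hC, ← integral_indicator_one hC]
  congr 1
  · exact integral_congr_ae ((ae_sub_mul_eq_indicator hA0_01 hA1_01 hmono _).mono
      fun ω h => by rw [← h]; ring)
  · exact integral_congr_ae ((ae_sub_mul_eq_indicator hA0_01 hA1_01 hmono 1).mono
      fun ω h => by rw [← h, Pi.one_apply, mul_one])

end Compliers

section InstrumentalVariables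

variable {Ω S : Type*} [MeasurableSpace Ω] [MeasurableSpace S] {P : Measure Ω} [IsFiniteMeasure P]
  {X : Ω → S} {A0 A1 Y0 Y1 : Ω → ℝ} {C₀ C₁ : ℝ}

lemma Unconfounded.integral_treatment_outcome_eq (hX : Measurable X) (hA0 : Measurable A0)
    (hA1 : Measurable A1) (hY0 : Measurable Y0) (hY1 : Measurable Y1)
    (hC₀ : ∀ ω, |Y0 ω| ≤ C₀) (hC₁ : ∀ ω, |Y1 ω| ≤ C₁) {ζ A Y : Ω → ℝ} {d l m : S → ℝ} {ε : ℝ}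
    (hU : Unconfounded P X (fun ω => (A0 ω, A1 ω, Y0 ω, Y1 ω)) ζ d)
    (hζ : Measurable ζ) (hζ01 : ∀ ω, ζ ω = 0 ∨ ζ ω = 1)
    (hd : Measurable d) (hε : 0 < ε) (hdε : ∀ x, ε ≤ d x)
    {π : ℝ × ℝ × ℝ × ℝ → ℝ} (hπ : Measurable π)
    (hπ01 : ∀ ω, π (A0 ω, A1 ω, Y0 ω, Y1 ω) = 0 ∨ π (A0 ω, A1 ω, Y0 ω, Y1 ω) = 1)
    (hAπ : ∀ ω, A ω * ζ ω = π (A0 ω, A1 ω, Y0 ω, Y1 ω) * ζ ω)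
    (hY : ∀ ω, Y ω = (1 - A ω) * Y0 ω + A ω * Y1 ω) (hl : Measurable l) (hm : Measurable m)
    (hlA : SameCondExp P X (fun ω => A ω * ζ ω) (fun ω => l (X ω) * ζ ω))
    (hmY : SameCondExp P X (fun ω => Y ω * ζ ω) (fun ω => m (X ω) * ζ ω)) :
    (Integrable (fun ω => l (X ω)) P ∧
      ∫ ω, l (X ω) ∂P = ∫ ω, π (A0 ω, A1 ω, Y0 ω, Y1 ω) ∂P) ∧
    (Integrable (fun ω => m (X ω)) P ∧
      ∫ ω, m (X ω) ∂P = ∫ ω, ((1 - π (A0 ω, A1 ω, Y0 ω, Y1 ω)) * Y0 ω +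
        π (A0 ω, A1 ω, Y0 ω, Y1 ω) * Y1 ω) ∂P) := by
  have hUm : Measurable fun ω => (A0 ω, A1 ω, Y0 ω, Y1 ω) :=
    hA0.prodMk (hA1.prodMk (hY0.prodMk hY1))
  have hζIcc : ∀ ω, ζ ω ∈ Icc (0 : ℝ) 1 := fun ω => by rcases hζ01 ω with h | h <;> simp [h]
  refine ⟨hU.integral_comp_eq hX hUm hζ hζIcc hd hε hdε hπ (c := 1)
      (fun ω => by rcases hπ01 ω with h | h <;> simp [h]) hAπ hl hlA,
    hU.integral_comp_eq hX hUm hζ hζIcc hd hε hdε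
      (φ := fun v => (1 - π v) * v.2.2.1 + π v * v.2.2.2) (by fun_prop)
      (fun ω => abs_potential_outcome_le (hπ01 ω) (hC₀ ω) (hC₁ ω)) (fun ω => ?_) hm hmY⟩
  rcases hζ01 ω with h | h
  · simp [h]
  · simpa [hY, h] using congrArg (fun a => (1 - a) * Y0 ω + a * Y1 ω) (by simpa [h] using hAπ ω)

end InstrumentalVariables

theorem stmt_5_general
    {Ω : Type*} [MeasurableSpace Ω] (P : Measure Ω) [IsProbabilityMeasure P]
    {S : Type*} [mS : MeasurableSpace S]
    (X : Ω → S) (hX : Measurable X)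
    (Z A0 A1 Y0 Y1 : Ω → ℝ)
    (hZ : Measurable Z) (hA0 : Measurable A0) (hA1 : Measurable A1)
    (hY0 : Measurable Y0) (hY1 : Measurable Y1)
    (hZ01 : ∀ ω, Z ω = 0 ∨ Z ω = 1)
    (hA0_01 : ∀ ω, A0 ω = 0 ∨ A0 ω = 1)
    (hA1_01 : ∀ ω, A1 ω = 0 ∨ A1 ω = 1)
    (hY0b : ∃ C, ∀ ω, |Y0 ω| ≤ C) (hY1b : ∃ C, ∀ ω, |Y1 ω| ≤ C)
    (A Y : Ω → ℝ)
    (hA : A = fun ω => (1 - Z ω) * A0 ω + Z ω * A1 ω)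
    (hY : Y = fun ω => (1 - A ω) * Y0 ω + A ω * Y1 ω)
    (e : S → ℝ) (he : Measurable e) (ε : ℝ) (hε : 0 < ε)
    (hebd : ∀ x, ε ≤ e x ∧ e x ≤ 1 - ε)
    (hUnconf : ∀ ψ : ℝ × ℝ × ℝ × ℝ → ℝ, Measurable ψ → (∃ C, ∀ v, |ψ v| ≤ C) →
      ∀ g : S → ℝ, Measurable g → (∃ C, ∀ x, |g x| ≤ C) →
      ∫ ω, Z ω * ψ (A0 ω, A1 ω, Y0 ω, Y1 ω) * g (X ω) ∂P
        = ∫ ω, e (X ω) * ψ (A0 ω, A1 ω, Y0 ω, Y1 ω) * g (X ω) ∂P)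
    (m0 m1 l0 l1 : S → ℝ)
    (hm0 : Measurable m0) (hm1 : Measurable m1)
    (hl0 : Measurable l0) (hl1 : Measurable l1)
    (hm0v : ∀ g : S → ℝ, Measurable g → (∃ C, ∀ x, |g x| ≤ C) →
      ∫ ω, Y ω * (if Z ω = 0 then (1:ℝ) else 0) * g (X ω) ∂P
        = ∫ ω, m0 (X ω) * (if Z ω = 0 then (1:ℝ) else 0) * g (X ω) ∂P)
    (hm1v : ∀ g : S → ℝ, Measurable g → (∃ C, ∀ x, |g x| ≤ C) →
      ∫ ω, Y ω * (if Z ω = 1 then (1:ℝ) else 0) * g (X ω) ∂P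
        = ∫ ω, m1 (X ω) * (if Z ω = 1 then (1:ℝ) else 0) * g (X ω) ∂P)
    (hl0v : ∀ g : S → ℝ, Measurable g → (∃ C, ∀ x, |g x| ≤ C) →
      ∫ ω, A ω * (if Z ω = 0 then (1:ℝ) else 0) * g (X ω) ∂P
        = ∫ ω, l0 (X ω) * (if Z ω = 0 then (1:ℝ) else 0) * g (X ω) ∂P)
    (hl1v : ∀ g : S → ℝ, Measurable g → (∃ C, ∀ x, |g x| ≤ C) →
      ∫ ω, A ω * (if Z ω = 1 then (1:ℝ) else 0) * g (X ω) ∂P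
        = ∫ ω, l1 (X ω) * (if Z ω = 1 then (1:ℝ) else 0) * g (X ω) ∂P)
    (hMono : P {ω | A0 ω ≤ A1 ω} = 1)
    (hRel : 0 < P {ω | A1 ω ≠ A0 ω}) :
    0 < P {ω | A1 ω = 1 ∧ A0 ω = 0}
    ∧ (∫ ω, (m1 (X ω) - m0 (X ω)) ∂P) / (∫ ω, (l1 (X ω) - l0 (X ω)) ∂P)
        = (∫ ω in {ω | A1 ω = 1 ∧ A0 ω = 0}, (Y1 ω - Y0 ω) ∂P)
          / (P {ω | A1 ω = 1 ∧ A0 ω = 0}).toReal := by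
  obtain ⟨C0, hC0⟩ := hY0b
  obtain ⟨C1, hC1⟩ := hY1b
  have hU₁ := Unconfounded.ite_eq_one hZ01 hUnconf
  have hU₀ := Unconfounded.ite_eq_zero hX (hA0.prodMk (hA1.prodMk (hY0.prodMk hY1))) hUnconf hZ
    hZ01 he fun x => abs_le.2 ⟨by linarith [hebd x], by linarith [hebd x]⟩
  obtain ⟨⟨hl1i, hl1⟩, hm1i, hm1⟩ := hU₁.integral_treatment_outcome_eq hX hA0 hA1 hY0 hY1 hC0 hC1
    (Measurable.ite (measurableSet_eq_fun hZ measurable_const) measurable_const measurable_const)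
    (fun ω => (ite_eq_or_eq _ _ _).symm) he hε (fun x => (hebd x).1) (π := fun v => v.2.1)
    (by fun_prop) hA1_01 (fun ω => by split_ifs with h <;> simp [hA, h]) (congrFun hY) hl1 hm1
    hl1v hm1v
  obtain ⟨⟨hl0i, hl0⟩, hm0i, hm0⟩ := hU₀.integral_treatment_outcome_eq hX hA0 hA1 hY0 hY1 hC0 hC1
    (Measurable.ite (measurableSet_eq_fun hZ measurable_const) measurable_const measurable_const)
    (fun ω => (ite_eq_or_eq _ _ _).symm) (measurable_const.sub he) hε
    (fun x => by linarith [hebd x]) (π := Prod.fst)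
    (by fun_prop) hA0_01 (fun ω => by split_ifs with h <;> simp [hA, h]) (congrFun hY) hl0 hm0
    hl0v hm0v
  have hmono : ∀ᵐ ω ∂P, A0 ω ≤ A1 ω :=
    (ae_iff_measure_eq (measurableSet_le hA0 hA1).nullMeasurableSet).2 (by rw [hMono, measure_univ])
  refine ⟨measure_compliers_pos hA0_01 hA1_01 hmono hRel, ?_⟩
  rw [integral_sub hm1i hm0i, integral_sub hl1i hl0i, hm1, hm0, hl1, hl0]
  exact integral_potential_sub_div_eq_setIntegral_div hA0 hA1 hY0 hY1 hC0 hC1 hA0_01 hA1_01 hmono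

/-- Lemma 1, identification of the LATE: under unconfoundedness, positivity,
monotonicity and relevance, χ0 := Γ0/Δ0 = E[Y1 − Y0 | A1 > A0], where the complier event
{A1 = 1, A0 = 0} has positive probability. -/
theorem stmt_5
    {Ω : Type*} [MeasurableSpace Ω] (P : Measure Ω) [IsProbabilityMeasure P]
    {S : Type*} [mS : MeasurableSpace S]
    (X : Ω → S) (hX : Measurable X)
    (Z A0 A1 Y0 Y1 : Ω → ℝ)
    (hZ : Measurable Z) (hA0 : Measurable A0) (hA1 : Measurable A1)
    (hY0 : Measurable Y0) (hY1 : Measurable Y1)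
    (hZ01 : ∀ ω, Z ω = 0 ∨ Z ω = 1)
    (hA0_01 : ∀ ω, A0 ω = 0 ∨ A0 ω = 1)
    (hA1_01 : ∀ ω, A1 ω = 0 ∨ A1 ω = 1)
    (hY0b : ∃ C, ∀ ω, |Y0 ω| ≤ C) (hY1b : ∃ C, ∀ ω, |Y1 ω| ≤ C)
    (A Y : Ω → ℝ)
    (hA : A = fun ω => (1 - Z ω) * A0 ω + Z ω * A1 ω)
    (hY : Y = fun ω => (1 - A ω) * Y0 ω + A ω * Y1 ω)
    (e : S → ℝ) (he : Measurable e) (ε : ℝ) (hε : 0 < ε) (hε2 : ε < 1/2)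
    (hebd : ∀ x, ε ≤ e x ∧ e x ≤ 1 - ε)
    (hVe : ∀ g : S → ℝ, Measurable g → (∃ C, ∀ x, |g x| ≤ C) →
      ∫ ω, Z ω * g (X ω) ∂P = ∫ ω, e (X ω) * g (X ω) ∂P)
    (hUnconf : ∀ ψ : ℝ × ℝ × ℝ × ℝ → ℝ, Measurable ψ → (∃ C, ∀ v, |ψ v| ≤ C) →
      ∀ g : S → ℝ, Measurable g → (∃ C, ∀ x, |g x| ≤ C) →
      ∫ ω, Z ω * ψ (A0 ω, A1 ω, Y0 ω, Y1 ω) * g (X ω) ∂P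
        = ∫ ω, e (X ω) * ψ (A0 ω, A1 ω, Y0 ω, Y1 ω) * g (X ω) ∂P)
    (m0 m1 l0 l1 : S → ℝ)
    (hm0 : Measurable m0) (hm1 : Measurable m1)
    (hl0 : Measurable l0) (hl1 : Measurable l1)
    (hm0v : ∀ g : S → ℝ, Measurable g → (∃ C, ∀ x, |g x| ≤ C) →
      ∫ ω, Y ω * (if Z ω = 0 then (1:ℝ) else 0) * g (X ω) ∂P
        = ∫ ω, m0 (X ω) * (if Z ω = 0 then (1:ℝ) else 0) * g (X ω) ∂P)
    (hm1v : ∀ g : S → ℝ, Measurable g → (∃ C, ∀ x, |g x| ≤ C) →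
      ∫ ω, Y ω * (if Z ω = 1 then (1:ℝ) else 0) * g (X ω) ∂P
        = ∫ ω, m1 (X ω) * (if Z ω = 1 then (1:ℝ) else 0) * g (X ω) ∂P)
    (hl0v : ∀ g : S → ℝ, Measurable g → (∃ C, ∀ x, |g x| ≤ C) →
      ∫ ω, A ω * (if Z ω = 0 then (1:ℝ) else 0) * g (X ω) ∂P
        = ∫ ω, l0 (X ω) * (if Z ω = 0 then (1:ℝ) else 0) * g (X ω) ∂P)
    (hl1v : ∀ g : S → ℝ, Measurable g → (∃ C, ∀ x, |g x| ≤ C) →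
      ∫ ω, A ω * (if Z ω = 1 then (1:ℝ) else 0) * g (X ω) ∂P
        = ∫ ω, l1 (X ω) * (if Z ω = 1 then (1:ℝ) else 0) * g (X ω) ∂P)
    (hMono : P {ω | A0 ω ≤ A1 ω} = 1)
    (hRel : 0 < P {ω | A1 ω ≠ A0 ω}) :
    0 < P {ω | A1 ω = 1 ∧ A0 ω = 0}
    ∧ (∫ ω, (m1 (X ω) - m0 (X ω)) ∂P) / (∫ ω, (l1 (X ω) - l0 (X ω)) ∂P)
        = (∫ ω in {ω | A1 ω = 1 ∧ A0 ω = 0}, (Y1 ω - Y0 ω) ∂P)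
          / (P {ω | A1 ω = 1 ∧ A0 ω = 0}).toReal :=
  stmt_5_general P (mS := mS) X hX Z A0 A1 Y0 Y1 hZ hA0 hA1 hY0 hY1 hZ01 hA0_01 hA1_01 hY0b hY1b A Y
    hA hY e he ε hε hebd hUnconf m0 m1 l0 l1 hm0 hm1 hl0 hl1 hm0v hm1v hl0v hl1v hMono hRel
end

section
/- (Double robustness of the uncentered influence function for Γ0, correct instrument propensity.) Let π0(x,z) := z·e(x) + (1−z)·(1−e(x)), where e∘X is a version of E[Z | σ(X)] with ε ≤ e ≤ 1−ε. Then for EVERY bounded measurable function μ : S × {0,1} → ℝ, E[ (2Z−1)/π0(X,Z) · (Y − μ(X,Z)) + μ(X,1) − μ(X,0) ] = Γ0 := E[m1(X) − m0(X)]. In particular the outcome regression μ may be arbitrarily misspecified. -/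
open MeasureTheory ProbabilityTheory

lemma aux_intb {Ω : Type*} [MeasurableSpace Ω] (P : Measure Ω) [IsFiniteMeasure P]
    {f : Ω → ℝ} (hf : Measurable f) {C : ℝ} (hb : ∀ ω, |f ω| ≤ C) : Integrable f P :=
  ⟨hf.aestronglyMeasurable, HasFiniteIntegral.of_bounded (ae_of_all _ hb)⟩

lemma bnd_mul {a b A B : ℝ} (ha : |a| ≤ A) (hb : |b| ≤ B) : |a * b| ≤ A * B := by
  rw [abs_mul]
  exact mul_le_mul ha hb (abs_nonneg _) ((abs_nonneg a).trans ha)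

lemma bnd_sub {a b A B : ℝ} (ha : |a| ≤ A) (hb : |b| ≤ B) : |a - b| ≤ A + B := by
  rw [sub_eq_add_neg]
  refine (abs_add_le _ _).trans ?_
  rw [abs_neg]
  exact add_le_add ha hb

lemma bnd_div {a b A ε : ℝ} (ha : |a| ≤ A) (hε : 0 < ε) (hb : ε ≤ b) : |a / b| ≤ A / ε := by
  rw [abs_div, abs_of_pos (lt_of_lt_of_le hε hb)]
  exact div_le_div₀ ((abs_nonneg a).trans ha) ha hε hb

lemma main_b {Ω : Type*} [MeasurableSpace Ω] (P : Measure Ω) [IsProbabilityMeasure P]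
    {S : Type*} [MeasurableSpace S] (X : Ω → S) (hX : Measurable X)
    (Z Y : Ω → ℝ) (hZ : Measurable Z) (hY : Measurable Y)
    (hZ01 : ∀ ω, Z ω = 0 ∨ Z ω = 1)
    (C : ℝ) (hYb : ∀ ω, |Y ω| ≤ C)
    (e : S → ℝ) (he : Measurable e) (ε : ℝ) (hε : 0 < ε)
    (hebd : ∀ x, ε ≤ e x ∧ e x ≤ 1 - ε)
    (hVe : ∀ g : S → ℝ, Measurable g → (∃ C, ∀ x, |g x| ≤ C) →
      ∫ ω, Z ω * g (X ω) ∂P = ∫ ω, e (X ω) * g (X ω) ∂P)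
    (m0 m1 : S → ℝ) (hm0 : Measurable m0) (hm1 : Measurable m1)
    (D0 D1 : ℝ) (hm0b : ∀ x, |m0 x| ≤ D0) (hm1b : ∀ x, |m1 x| ≤ D1)
    (hm1v : ∀ g : S → ℝ, Measurable g → (∃ C, ∀ x, |g x| ≤ C) →
      ∫ ω, Y ω * Z ω * g (X ω) ∂P = ∫ ω, m1 (X ω) * Z ω * g (X ω) ∂P)
    (hm0v : ∀ g : S → ℝ, Measurable g → (∃ C, ∀ x, |g x| ≤ C) →
      ∫ ω, Y ω * (1 - Z ω) * g (X ω) ∂P = ∫ ω, m0 (X ω) * (1 - Z ω) * g (X ω) ∂P)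
    (μ0 μ1 : S → ℝ) (hμ0 : Measurable μ0) (hμ1 : Measurable μ1)
    (E0 E1 : ℝ) (hμ0b : ∀ x, |μ0 x| ≤ E0) (hμ1b : ∀ x, |μ1 x| ≤ E1) :
    ∫ ω, (2 * Z ω - 1) / (Z ω * e (X ω) + (1 - Z ω) * (1 - e (X ω)))
          * (Y ω - (if Z ω = 1 then μ1 (X ω) else μ0 (X ω)))
        + (μ1 (X ω) - μ0 (X ω)) ∂P
      = ∫ ω, m1 (X ω) - m0 (X ω) ∂P := by
  have hZb : ∀ ω, |Z ω| ≤ 1 := fun ω => by rcases hZ01 ω with h | h <;> rw [h] <;> norm_num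
  have h1Zb : ∀ ω, |1 - Z ω| ≤ 1 := fun ω => by rcases hZ01 ω with h | h <;> rw [h] <;> norm_num
  have helow : ∀ x, 0 < e x := fun x => lt_of_lt_of_le hε (hebd x).1
  have hqlow : ∀ x, ε ≤ 1 - e x := fun x => by linarith [(hebd x).2]
  have hqpos : ∀ x, 0 < 1 - e x := fun x => lt_of_lt_of_le hε (hqlow x)
  have he0 : ∀ x, e x ≠ 0 := fun x => (helow x).ne'
  have hq0 : ∀ x, (1 : ℝ) - e x ≠ 0 := fun x => (hqpos x).ne'
  have heb1 : ∀ x, |e x| ≤ 1 := fun x => by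
    rw [abs_of_pos (helow x)]; linarith [(hebd x).2]
  have hqb1 : ∀ x, |1 - e x| ≤ 1 := fun x => by
    rw [abs_of_pos (hqpos x)]; linarith [(hebd x).1]
  -- key identity for e
  have key1 : ∀ (g : S → ℝ), Measurable g → ∀ G : ℝ, (∀ x, |g x| ≤ G) →
      ∫ ω, Z ω * (g (X ω) / e (X ω)) ∂P = ∫ ω, g (X ω) ∂P := by
    intro g hg G hG
    have h := hVe (fun x => g x / e x) (hg.div he)
      ⟨G / ε, fun x => bnd_div (hG x) hε (hebd x).1⟩
    calc ∫ ω, Z ω * (g (X ω) / e (X ω)) ∂P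
        = ∫ ω, e (X ω) * (g (X ω) / e (X ω)) ∂P := h
      _ = ∫ ω, g (X ω) ∂P :=
          integral_congr_ae (ae_of_all _ fun ω => by
            dsimp only; rw [mul_comm, div_mul_cancel₀ _ (he0 (X ω))])
  -- transfer of hVe to 1 - Z
  have hVe0 : ∀ g : S → ℝ, Measurable g → ∀ G : ℝ, (∀ x, |g x| ≤ G) →
      ∫ ω, (1 - Z ω) * g (X ω) ∂P = ∫ ω, (1 - e (X ω)) * g (X ω) ∂P := by
    intro g hg G hG
    have ig : Integrable (fun ω => g (X ω)) P := aux_intb P (hg.comp hX) (fun ω => hG (X ω))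
    have iZg : Integrable (fun ω => Z ω * g (X ω)) P :=
      aux_intb P (hZ.mul (hg.comp hX)) (C := 1 * G) (fun ω => bnd_mul (hZb ω) (hG (X ω)))
    have ieg : Integrable (fun ω => e (X ω) * g (X ω)) P :=
      aux_intb P ((he.comp hX).mul (hg.comp hX)) (C := 1 * G)
        (fun ω => bnd_mul (heb1 (X ω)) (hG (X ω)))
    calc ∫ ω, (1 - Z ω) * g (X ω) ∂P
        = ∫ ω, (g (X ω) - Z ω * g (X ω)) ∂P :=
          integral_congr_ae (ae_of_all _ fun ω => by ring)
      _ = (∫ ω, g (X ω) ∂P) - ∫ ω, Z ω * g (X ω) ∂P := integral_sub ig iZg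
      _ = (∫ ω, g (X ω) ∂P) - ∫ ω, e (X ω) * g (X ω) ∂P := by
          rw [hVe g hg ⟨G, hG⟩]
      _ = ∫ ω, (g (X ω) - e (X ω) * g (X ω)) ∂P := (integral_sub ig ieg).symm
      _ = ∫ ω, (1 - e (X ω)) * g (X ω) ∂P :=
          integral_congr_ae (ae_of_all _ fun ω => by ring)
  have key0 : ∀ (g : S → ℝ), Measurable g → ∀ G : ℝ, (∀ x, |g x| ≤ G) →
      ∫ ω, (1 - Z ω) * (g (X ω) / (1 - e (X ω))) ∂P = ∫ ω, g (X ω) ∂P := by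
    intro g hg G hG
    have h := hVe0 (fun x => g x / (1 - e x)) (hg.div (measurable_const.sub he)) (G / ε)
      (fun x => bnd_div (hG x) hε (hqlow x))
    calc ∫ ω, (1 - Z ω) * (g (X ω) / (1 - e (X ω))) ∂P
        = ∫ ω, (1 - e (X ω)) * (g (X ω) / (1 - e (X ω))) ∂P := h
      _ = ∫ ω, g (X ω) ∂P :=
          integral_congr_ae (ae_of_all _ fun ω => by
            dsimp only; rw [mul_comm, div_mul_cancel₀ _ (hq0 (X ω))])
  -- pointwise decomposition
  have hpt : ∀ ω, (2 * Z ω - 1) / (Z ω * e (X ω) + (1 - Z ω) * (1 - e (X ω)))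
          * (Y ω - (if Z ω = 1 then μ1 (X ω) else μ0 (X ω)))
        + (μ1 (X ω) - μ0 (X ω))
      = Z ω * ((Y ω - μ1 (X ω)) / e (X ω))
        - (1 - Z ω) * ((Y ω - μ0 (X ω)) / (1 - e (X ω)))
        + (μ1 (X ω) - μ0 (X ω)) := by
    intro ω
    rcases hZ01 ω with h | h <;> rw [h] <;> norm_num
    · field_simp
    · field_simp
  -- integrability of pieces
  have if1 : Integrable (fun ω => Z ω * ((Y ω - μ1 (X ω)) / e (X ω))) P := by
    refine aux_intb P (hZ.mul ((hY.sub (hμ1.comp hX)).div (he.comp hX)))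
      (C := 1 * ((C + E1) / ε)) ?_
    exact fun ω => bnd_mul (hZb ω) (bnd_div (bnd_sub (hYb ω) (hμ1b (X ω))) hε (hebd (X ω)).1)
  have if2 : Integrable (fun ω => (1 - Z ω) * ((Y ω - μ0 (X ω)) / (1 - e (X ω)))) P := by
    refine aux_intb P ((measurable_const.sub hZ).mul
      ((hY.sub (hμ0.comp hX)).div (measurable_const.sub (he.comp hX))))
      (C := 1 * ((C + E0) / ε)) ?_
    exact fun ω => bnd_mul (h1Zb ω) (bnd_div (bnd_sub (hYb ω) (hμ0b (X ω))) hε (hqlow (X ω)))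
  have if3 : Integrable (fun ω => μ1 (X ω) - μ0 (X ω)) P := by
    refine aux_intb P ((hμ1.comp hX).sub (hμ0.comp hX)) (C := E1 + E0) ?_
    exact fun ω => bnd_sub (hμ1b (X ω)) (hμ0b (X ω))
  have iμ1 : Integrable (fun ω => μ1 (X ω)) P := aux_intb P (hμ1.comp hX) (fun ω => hμ1b (X ω))
  have iμ0 : Integrable (fun ω => μ0 (X ω)) P := aux_intb P (hμ0.comp hX) (fun ω => hμ0b (X ω))
  have im1 : Integrable (fun ω => m1 (X ω)) P := aux_intb P (hm1.comp hX) (fun ω => hm1b (X ω))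
  have im0 : Integrable (fun ω => m0 (X ω)) P := aux_intb P (hm0.comp hX) (fun ω => hm0b (X ω))
  have iZY : Integrable (fun ω => Z ω * (Y ω / e (X ω))) P := by
    refine aux_intb P (hZ.mul (hY.div (he.comp hX))) (C := 1 * (C / ε)) ?_
    exact fun ω => bnd_mul (hZb ω) (bnd_div (hYb ω) hε (hebd (X ω)).1)
  have iZμ1 : Integrable (fun ω => Z ω * (μ1 (X ω) / e (X ω))) P := by
    refine aux_intb P (hZ.mul ((hμ1.comp hX).div (he.comp hX))) (C := 1 * (E1 / ε)) ?_
    exact fun ω => bnd_mul (hZb ω) (bnd_div (hμ1b (X ω)) hε (hebd (X ω)).1)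
  have iWY : Integrable (fun ω => (1 - Z ω) * (Y ω / (1 - e (X ω)))) P := by
    refine aux_intb P ((measurable_const.sub hZ).mul
      (hY.div (measurable_const.sub (he.comp hX)))) (C := 1 * (C / ε)) ?_
    exact fun ω => bnd_mul (h1Zb ω) (bnd_div (hYb ω) hε (hqlow (X ω)))
  have iWμ0 : Integrable (fun ω => (1 - Z ω) * (μ0 (X ω) / (1 - e (X ω)))) P := by
    refine aux_intb P ((measurable_const.sub hZ).mul
      ((hμ0.comp hX).div (measurable_const.sub (he.comp hX)))) (C := 1 * (E0 / ε)) ?_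
    exact fun ω => bnd_mul (h1Zb ω) (bnd_div (hμ0b (X ω)) hε (hqlow (X ω)))
  -- value of piece 1
  have hv1 : ∫ ω, Z ω * ((Y ω - μ1 (X ω)) / e (X ω)) ∂P
      = (∫ ω, m1 (X ω) ∂P) - ∫ ω, μ1 (X ω) ∂P := by
    have hZYe : ∫ ω, Z ω * (Y ω / e (X ω)) ∂P = ∫ ω, m1 (X ω) ∂P := by
      have h1 : ∫ ω, Z ω * (Y ω / e (X ω)) ∂P
          = ∫ ω, Y ω * Z ω * (1 / e (X ω)) ∂P :=
        integral_congr_ae (ae_of_all _ fun ω => by ring)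
      have h2 : ∫ ω, Y ω * Z ω * (1 / e (X ω)) ∂P
          = ∫ ω, m1 (X ω) * Z ω * (1 / e (X ω)) ∂P :=
        hm1v (fun x => 1 / e x) (measurable_const.div he)
          ⟨1 / ε, fun x => bnd_div (by norm_num) hε (hebd x).1⟩
      have h3 : ∫ ω, m1 (X ω) * Z ω * (1 / e (X ω)) ∂P
          = ∫ ω, Z ω * (m1 (X ω) / e (X ω)) ∂P :=
        integral_congr_ae (ae_of_all _ fun ω => by ring)
      rw [h1, h2, h3, key1 m1 hm1 D1 hm1b]
    have hZμ : ∫ ω, Z ω * (μ1 (X ω) / e (X ω)) ∂P = ∫ ω, μ1 (X ω) ∂P :=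
      key1 μ1 hμ1 E1 hμ1b
    calc ∫ ω, Z ω * ((Y ω - μ1 (X ω)) / e (X ω)) ∂P
        = ∫ ω, (Z ω * (Y ω / e (X ω)) - Z ω * (μ1 (X ω) / e (X ω))) ∂P :=
          integral_congr_ae (ae_of_all _ fun ω => by ring)
      _ = (∫ ω, Z ω * (Y ω / e (X ω)) ∂P) - ∫ ω, Z ω * (μ1 (X ω) / e (X ω)) ∂P :=
          integral_sub iZY iZμ1
      _ = (∫ ω, m1 (X ω) ∂P) - ∫ ω, μ1 (X ω) ∂P := by rw [hZYe, hZμ]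
  -- value of piece 2
  have hv2 : ∫ ω, (1 - Z ω) * ((Y ω - μ0 (X ω)) / (1 - e (X ω))) ∂P
      = (∫ ω, m0 (X ω) ∂P) - ∫ ω, μ0 (X ω) ∂P := by
    have hWYe : ∫ ω, (1 - Z ω) * (Y ω / (1 - e (X ω))) ∂P = ∫ ω, m0 (X ω) ∂P := by
      have h1 : ∫ ω, (1 - Z ω) * (Y ω / (1 - e (X ω))) ∂P
          = ∫ ω, Y ω * (1 - Z ω) * (1 / (1 - e (X ω))) ∂P :=
        integral_congr_ae (ae_of_all _ fun ω => by ring)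
      have h2 : ∫ ω, Y ω * (1 - Z ω) * (1 / (1 - e (X ω))) ∂P
          = ∫ ω, m0 (X ω) * (1 - Z ω) * (1 / (1 - e (X ω))) ∂P :=
        hm0v (fun x => 1 / (1 - e x)) (measurable_const.div (measurable_const.sub he))
          ⟨1 / ε, fun x => bnd_div (by norm_num) hε (hqlow x)⟩
      have h3 : ∫ ω, m0 (X ω) * (1 - Z ω) * (1 / (1 - e (X ω))) ∂P
          = ∫ ω, (1 - Z ω) * (m0 (X ω) / (1 - e (X ω))) ∂P :=
        integral_congr_ae (ae_of_all _ fun ω => by ring)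
      rw [h1, h2, h3, key0 m0 hm0 D0 hm0b]
    have hWμ : ∫ ω, (1 - Z ω) * (μ0 (X ω) / (1 - e (X ω))) ∂P = ∫ ω, μ0 (X ω) ∂P :=
      key0 μ0 hμ0 E0 hμ0b
    calc ∫ ω, (1 - Z ω) * ((Y ω - μ0 (X ω)) / (1 - e (X ω))) ∂P
        = ∫ ω, ((1 - Z ω) * (Y ω / (1 - e (X ω)))
            - (1 - Z ω) * (μ0 (X ω) / (1 - e (X ω)))) ∂P :=
          integral_congr_ae (ae_of_all _ fun ω => by ring)
      _ = (∫ ω, (1 - Z ω) * (Y ω / (1 - e (X ω))) ∂P)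
            - ∫ ω, (1 - Z ω) * (μ0 (X ω) / (1 - e (X ω))) ∂P := integral_sub iWY iWμ0
      _ = (∫ ω, m0 (X ω) ∂P) - ∫ ω, μ0 (X ω) ∂P := by rw [hWYe, hWμ]
  have hv3 : ∫ ω, (μ1 (X ω) - μ0 (X ω)) ∂P
      = (∫ ω, μ1 (X ω) ∂P) - ∫ ω, μ0 (X ω) ∂P := integral_sub iμ1 iμ0
  have hRHS : ∫ ω, m1 (X ω) - m0 (X ω) ∂P
      = (∫ ω, m1 (X ω) ∂P) - ∫ ω, m0 (X ω) ∂P := integral_sub im1 im0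
  calc ∫ ω, (2 * Z ω - 1) / (Z ω * e (X ω) + (1 - Z ω) * (1 - e (X ω)))
          * (Y ω - (if Z ω = 1 then μ1 (X ω) else μ0 (X ω)))
        + (μ1 (X ω) - μ0 (X ω)) ∂P
      = ∫ ω, (Z ω * ((Y ω - μ1 (X ω)) / e (X ω))
          - (1 - Z ω) * ((Y ω - μ0 (X ω)) / (1 - e (X ω)))
          + (μ1 (X ω) - μ0 (X ω))) ∂P := integral_congr_ae (ae_of_all _ hpt)
    _ = (∫ ω, (Z ω * ((Y ω - μ1 (X ω)) / e (X ω))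
          - (1 - Z ω) * ((Y ω - μ0 (X ω)) / (1 - e (X ω)))) ∂P)
          + ∫ ω, (μ1 (X ω) - μ0 (X ω)) ∂P := integral_add (if1.sub if2) if3
    _ = (∫ ω, Z ω * ((Y ω - μ1 (X ω)) / e (X ω)) ∂P)
          - (∫ ω, (1 - Z ω) * ((Y ω - μ0 (X ω)) / (1 - e (X ω))) ∂P)
          + ∫ ω, (μ1 (X ω) - μ0 (X ω)) ∂P := by rw [integral_sub if1 if2]
    _ = ∫ ω, m1 (X ω) - m0 (X ω) ∂P := by rw [hv1, hv2, hv3, hRHS]; ring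

lemma aux_ae_le {Ω : Type*} [MeasurableSpace Ω] (P : Measure Ω) [IsProbabilityMeasure P]
    {S : Type*} [MeasurableSpace S] (X : Ω → S) (hX : Measurable X)
    (W : Ω → ℝ) (hW : Measurable W) (hW01 : ∀ ω, W ω = 0 ∨ W ω = 1)
    (Y : Ω → ℝ) (hY : Measurable Y) (C : ℝ) (hC : 0 ≤ C) (hYb : ∀ ω, |Y ω| ≤ C)
    (e : S → ℝ) (he : Measurable e) (ε : ℝ) (hε : 0 < ε) (hlow : ∀ x, ε ≤ e x) (hup : ∀ x, e x ≤ 1)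
    (hVe : ∀ g : S → ℝ, Measurable g → (∃ D, ∀ x, |g x| ≤ D) →
      ∫ ω, W ω * g (X ω) ∂P = ∫ ω, e (X ω) * g (X ω) ∂P)
    (m : S → ℝ) (hm : Measurable m)
    (hmv : ∀ g : S → ℝ, Measurable g → (∃ D, ∀ x, |g x| ≤ D) →
      ∫ ω, Y ω * W ω * g (X ω) ∂P = ∫ ω, m (X ω) * W ω * g (X ω) ∂P) :
    ∀ᵐ ω ∂P, m (X ω) ≤ C + 1 := by
  have hW0 : ∀ ω, 0 ≤ W ω := fun ω => by rcases hW01 ω with h | h <;> rw [h] <;> norm_num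
  have hWb : ∀ ω, |W ω| ≤ 1 := fun ω => by rcases hW01 ω with h | h <;> rw [h] <;> norm_num
  set g : ℕ → S → ℝ := fun n x => if C + 1 ≤ m x ∧ m x ≤ C + 1 + n then (1:ℝ) else 0 with hg
  have hgmeas : ∀ n, Measurable (g n) := by
    intro n
    exact Measurable.ite ((measurableSet_le measurable_const hm).inter
      (measurableSet_le hm measurable_const)) measurable_const measurable_const
  have hg01 : ∀ n x, 0 ≤ g n x ∧ g n x ≤ 1 := by
    intro n x; simp only [hg]; split <;> norm_num
  have hgb : ∀ n x, |g n x| ≤ 1 := by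
    intro n x; rw [abs_le]; constructor
    · linarith [(hg01 n x).1]
    · exact (hg01 n x).2
  -- integral of g n (X ω) is zero
  have hkey : ∀ n : ℕ, ∫ ω, g n (X ω) ∂P = 0 := by
    intro n
    have hiWg : Integrable (fun ω => W ω * g n (X ω)) P := by
      refine aux_intb P (hW.mul ((hgmeas n).comp hX)) (C := 1) ?_
      intro ω
      simpa using bnd_mul (hWb ω) (hgb n (X ω))
    have hiYWg : Integrable (fun ω => Y ω * W ω * g n (X ω)) P := by
      refine aux_intb P ((hY.mul hW).mul ((hgmeas n).comp hX)) (C := C * 1 * 1) ?_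
      intro ω; exact bnd_mul (bnd_mul (hYb ω) (hWb ω)) (hgb n (X ω))
    have hiMWg : Integrable (fun ω => m (X ω) * W ω * g n (X ω)) P := by
      refine aux_intb P (((hm.comp hX).mul hW).mul ((hgmeas n).comp hX)) (C := C + 1 + n) ?_
      intro ω
      by_cases hcond : C + 1 ≤ m (X ω) ∧ m (X ω) ≤ C + 1 + n
      · have : g n (X ω) = 1 := if_pos hcond
        rw [this, mul_one, abs_mul]
        have h1 : |m (X ω)| ≤ C + 1 + n := by
          rw [abs_le]; constructor <;> [linarith [hcond.1]; exact hcond.2]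
        calc |m (X ω)| * |W ω| ≤ (C + 1 + n) * 1 :=
              mul_le_mul h1 (hWb ω) (abs_nonneg _) (by positivity)
          _ = C + 1 + n := by ring
      · have : g n (X ω) = 0 := if_neg hcond
        rw [this, mul_zero, abs_zero]; positivity
    have heq := hmv (g n) (hgmeas n) ⟨1, hgb n⟩
    -- (C+1) * I ≤ ∫ m W g = ∫ Y W g ≤ C * I where I = ∫ W g
    have hle1 : (C + 1) * ∫ ω, W ω * g n (X ω) ∂P ≤ ∫ ω, m (X ω) * W ω * g n (X ω) ∂P := by
      rw [← integral_const_mul]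
      refine integral_mono (hiWg.const_mul _) hiMWg ?_
      intro ω
      dsimp only
      by_cases hcond : C + 1 ≤ m (X ω) ∧ m (X ω) ≤ C + 1 + n
      · have hgv : g n (X ω) = 1 := if_pos hcond
        rw [hgv, mul_one, mul_one]
        exact mul_le_mul_of_nonneg_right hcond.1 (hW0 ω)
      · have hgv : g n (X ω) = 0 := if_neg hcond
        rw [hgv]; simp
    have hle2 : ∫ ω, Y ω * W ω * g n (X ω) ∂P ≤ C * ∫ ω, W ω * g n (X ω) ∂P := by
      rw [← integral_const_mul]
      refine integral_mono hiYWg (hiWg.const_mul _) ?_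
      intro ω
      dsimp only
      have h1 : Y ω ≤ C := le_of_abs_le (hYb ω)
      have h2 : 0 ≤ W ω * g n (X ω) := mul_nonneg (hW0 ω) (hg01 n (X ω)).1
      calc Y ω * W ω * g n (X ω) = Y ω * (W ω * g n (X ω)) := mul_assoc _ _ _
        _ ≤ C * (W ω * g n (X ω)) := mul_le_mul_of_nonneg_right h1 h2
    have hInn : 0 ≤ ∫ ω, W ω * g n (X ω) ∂P :=
      integral_nonneg (fun ω => mul_nonneg (hW0 ω) (hg01 n (X ω)).1)
    have hI0 : ∫ ω, W ω * g n (X ω) ∂P = 0 := by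
      have := heq
      nlinarith [hle1, hle2]
    -- use hVe
    have heg := hVe (g n) (hgmeas n) ⟨1, hgb n⟩
    have hieg : Integrable (fun ω => e (X ω) * g n (X ω)) P := by
      refine aux_intb P ((he.comp hX).mul ((hgmeas n).comp hX)) (C := 1 * 1) ?_
      intro ω
      refine bnd_mul ?_ (hgb n (X ω))
      rw [abs_le]
      exact ⟨by linarith [hlow (X ω)], hup (X ω)⟩
    have hig : Integrable (fun ω => g n (X ω)) P :=
      aux_intb P ((hgmeas n).comp hX) (hgb n <| X ·)
    have hle3 : ε * ∫ ω, g n (X ω) ∂P ≤ ∫ ω, e (X ω) * g n (X ω) ∂P := by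
      rw [← integral_const_mul]
      refine integral_mono (hig.const_mul _) hieg ?_
      intro ω
      exact mul_le_mul_of_nonneg_right (hlow (X ω)) (hg01 n (X ω)).1
    have hgn0 : 0 ≤ ∫ ω, g n (X ω) ∂P := integral_nonneg (fun ω => (hg01 n (X ω)).1)
    rw [← heg, hI0] at hle3
    nlinarith
  -- conclude a.e.
  have hae : ∀ n : ℕ, ∀ᵐ ω ∂P, g n (X ω) = 0 := by
    intro n
    have hig : Integrable (fun ω => g n (X ω)) P :=
      aux_intb P ((hgmeas n).comp hX) (hgb n <| X ·)
    have := (integral_eq_zero_iff_of_nonneg (fun ω => (hg01 n (X ω)).1) hig).mp (hkey n)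
    filter_upwards [this] with ω hω using hω
  rw [← ae_all_iff] at hae
  filter_upwards [hae] with ω hω
  by_contra hcon
  push_neg at hcon
  obtain ⟨n, hn⟩ := exists_nat_ge (m (X ω) - (C + 1))
  have : g n (X ω) = 1 := if_pos ⟨le_of_lt hcon, by linarith⟩
  rw [hω n] at this
  norm_num at this


/-- double robustness of the uncentered influence function for Γ0, correct
instrument propensity: with π0(x,z) = z·e(x) + (1−z)·(1−e(x)), for every bounded measurable
μ : S × {0,1} → ℝ (encoded by its two sections μ0*, μ1*),
E[(2Z−1)/π0(X,Z)·(Y − μ(X,Z)) + μ(X,1) − μ(X,0)] = Γ0 := E[m1(X) − m0(X)]. -/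
theorem stmt_7
    {Ω : Type*} [MeasurableSpace Ω] (P : Measure Ω) [IsProbabilityMeasure P]
    {S : Type*} [mS : MeasurableSpace S]
    (X : Ω → S) (hX : Measurable X)
    (Z Y : Ω → ℝ) (hZ : Measurable Z) (hY : Measurable Y)
    (hZ01 : ∀ ω, Z ω = 0 ∨ Z ω = 1)
    (hYb : ∃ C, ∀ ω, |Y ω| ≤ C)
    (e : S → ℝ) (he : Measurable e) (ε : ℝ) (hε : 0 < ε) (hε2 : ε < 1/2)
    (hebd : ∀ x, ε ≤ e x ∧ e x ≤ 1 - ε)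
    (hVe : ∀ g : S → ℝ, Measurable g → (∃ C, ∀ x, |g x| ≤ C) →
      ∫ ω, Z ω * g (X ω) ∂P = ∫ ω, e (X ω) * g (X ω) ∂P)
    (m0 m1 : S → ℝ) (hm0 : Measurable m0) (hm1 : Measurable m1)
    (hm0v : ∀ g : S → ℝ, Measurable g → (∃ C, ∀ x, |g x| ≤ C) →
      ∫ ω, Y ω * (if Z ω = 0 then (1:ℝ) else 0) * g (X ω) ∂P
        = ∫ ω, m0 (X ω) * (if Z ω = 0 then (1:ℝ) else 0) * g (X ω) ∂P)
    (hm1v : ∀ g : S → ℝ, Measurable g → (∃ C, ∀ x, |g x| ≤ C) →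
      ∫ ω, Y ω * (if Z ω = 1 then (1:ℝ) else 0) * g (X ω) ∂P
        = ∫ ω, m1 (X ω) * (if Z ω = 1 then (1:ℝ) else 0) * g (X ω) ∂P) :
    ∀ μ0 μ1 : S → ℝ, Measurable μ0 → Measurable μ1 →
      (∃ C, ∀ x, |μ0 x| ≤ C) → (∃ C, ∀ x, |μ1 x| ≤ C) →
      ∫ ω, (2 * Z ω - 1) / (Z ω * e (X ω) + (1 - Z ω) * (1 - e (X ω)))
            * (Y ω - (if Z ω = 1 then μ1 (X ω) else μ0 (X ω)))
          + (μ1 (X ω) - μ0 (X ω)) ∂P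
        = ∫ ω, m1 (X ω) - m0 (X ω) ∂P := by
  intro μ0 μ1 hμ0 hμ1 hμ0b hμ1b
  obtain ⟨C0, hC0⟩ := hYb
  obtain ⟨E0, hE0⟩ := hμ0b
  obtain ⟨E1, hE1⟩ := hμ1b
  set C : ℝ := max C0 0 with hCdef
  have hC : 0 ≤ C := le_max_right _ _
  have hYb' : ∀ ω, |Y ω| ≤ C := fun ω => (hC0 ω).trans (le_max_left _ _)
  -- convert the indicator forms
  have hite1 : ∀ ω, (if Z ω = 1 then (1:ℝ) else 0) = Z ω := fun ω => by
    rcases hZ01 ω with h | h <;> rw [h] <;> norm_num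
  have hite0 : ∀ ω, (if Z ω = 0 then (1:ℝ) else 0) = 1 - Z ω := fun ω => by
    rcases hZ01 ω with h | h <;> rw [h] <;> norm_num
  have hm1v' : ∀ g : S → ℝ, Measurable g → (∃ C, ∀ x, |g x| ≤ C) →
      ∫ ω, Y ω * Z ω * g (X ω) ∂P = ∫ ω, m1 (X ω) * Z ω * g (X ω) ∂P := by
    intro g hg hb
    calc ∫ ω, Y ω * Z ω * g (X ω) ∂P
        = ∫ ω, Y ω * (if Z ω = 1 then (1:ℝ) else 0) * g (X ω) ∂P :=
          integral_congr_ae (ae_of_all _ fun ω => by dsimp only; rw [hite1 ω])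
      _ = ∫ ω, m1 (X ω) * (if Z ω = 1 then (1:ℝ) else 0) * g (X ω) ∂P := hm1v g hg hb
      _ = ∫ ω, m1 (X ω) * Z ω * g (X ω) ∂P :=
          integral_congr_ae (ae_of_all _ fun ω => by dsimp only; rw [hite1 ω])
  have hm0v' : ∀ g : S → ℝ, Measurable g → (∃ C, ∀ x, |g x| ≤ C) →
      ∫ ω, Y ω * (1 - Z ω) * g (X ω) ∂P = ∫ ω, m0 (X ω) * (1 - Z ω) * g (X ω) ∂P := by
    intro g hg hb
    calc ∫ ω, Y ω * (1 - Z ω) * g (X ω) ∂P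
        = ∫ ω, Y ω * (if Z ω = 0 then (1:ℝ) else 0) * g (X ω) ∂P :=
          integral_congr_ae (ae_of_all _ fun ω => by dsimp only; rw [hite0 ω])
      _ = ∫ ω, m0 (X ω) * (if Z ω = 0 then (1:ℝ) else 0) * g (X ω) ∂P := hm0v g hg hb
      _ = ∫ ω, m0 (X ω) * (1 - Z ω) * g (X ω) ∂P :=
          integral_congr_ae (ae_of_all _ fun ω => by dsimp only; rw [hite0 ω])
  -- W = 1 - Z facts
  have hW01 : ∀ ω, (1 - Z ω) = 0 ∨ (1 - Z ω) = 1 := fun ω => by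
    rcases hZ01 ω with h | h
    · right; rw [h]; ring
    · left; rw [h]; ring
  have hZb : ∀ ω, |Z ω| ≤ 1 := fun ω => by rcases hZ01 ω with h | h <;> rw [h] <;> norm_num
  have hqlow : ∀ x, ε ≤ 1 - e x := fun x => by linarith [(hebd x).2]
  have heup : ∀ x, e x ≤ 1 := fun x => by linarith [(hebd x).2]
  have hqup : ∀ x, 1 - e x ≤ 1 := fun x => by linarith [(hebd x).1]
  have heb1 : ∀ x, |e x| ≤ 1 := fun x => by
    rw [abs_of_pos (lt_of_lt_of_le hε (hebd x).1)]; exact heup x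
  have hVe0 : ∀ g : S → ℝ, Measurable g → (∃ D, ∀ x, |g x| ≤ D) →
      ∫ ω, (1 - Z ω) * g (X ω) ∂P = ∫ ω, (1 - e (X ω)) * g (X ω) ∂P := by
    intro g hg hb
    obtain ⟨G, hG⟩ := hb
    have ig : Integrable (fun ω => g (X ω)) P := aux_intb P (hg.comp hX) (fun ω => hG (X ω))
    have iZg : Integrable (fun ω => Z ω * g (X ω)) P :=
      aux_intb P (hZ.mul (hg.comp hX)) (C := 1 * G) (fun ω => bnd_mul (hZb ω) (hG (X ω)))
    have ieg : Integrable (fun ω => e (X ω) * g (X ω)) P :=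
      aux_intb P ((he.comp hX).mul (hg.comp hX)) (C := 1 * G)
        (fun ω => bnd_mul (heb1 (X ω)) (hG (X ω)))
    calc ∫ ω, (1 - Z ω) * g (X ω) ∂P
        = ∫ ω, (g (X ω) - Z ω * g (X ω)) ∂P :=
          integral_congr_ae (ae_of_all _ fun ω => by ring)
      _ = (∫ ω, g (X ω) ∂P) - ∫ ω, Z ω * g (X ω) ∂P := integral_sub ig iZg
      _ = (∫ ω, g (X ω) ∂P) - ∫ ω, e (X ω) * g (X ω) ∂P := by rw [hVe g hg ⟨G, hG⟩]
      _ = ∫ ω, (g (X ω) - e (X ω) * g (X ω)) ∂P := (integral_sub ig ieg).symm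
      _ = ∫ ω, (1 - e (X ω)) * g (X ω) ∂P :=
          integral_congr_ae (ae_of_all _ fun ω => by ring)
  -- four a.e. bounds
  have b1 : ∀ᵐ ω ∂P, m1 (X ω) ≤ C + 1 :=
    aux_ae_le P X hX Z hZ hZ01 Y hY C hC hYb' e he ε hε (fun x => (hebd x).1) heup
      hVe m1 hm1 hm1v'
  have b1' : ∀ᵐ ω ∂P, -(m1 (X ω)) ≤ C + 1 := by
    have := aux_ae_le P X hX Z hZ hZ01 (fun ω => -Y ω) hY.neg C hC
      (fun ω => by rw [abs_neg]; exact hYb' ω) e he ε hε (fun x => (hebd x).1) heup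
      hVe (fun x => -(m1 x)) hm1.neg
      (fun g hg hb => by
        simp only [neg_mul, integral_neg]
        rw [hm1v' g hg hb])
    filter_upwards [this] with ω h using h
  have b0 : ∀ᵐ ω ∂P, m0 (X ω) ≤ C + 1 :=
    aux_ae_le P X hX (fun ω => 1 - Z ω) (measurable_const.sub hZ) hW01 Y hY C hC hYb'
      (fun x => 1 - e x) (measurable_const.sub he) ε hε hqlow hqup hVe0 m0 hm0 hm0v'
  have b0' : ∀ᵐ ω ∂P, -(m0 (X ω)) ≤ C + 1 := by
    have := aux_ae_le P X hX (fun ω => 1 - Z ω) (measurable_const.sub hZ) hW01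
      (fun ω => -Y ω) hY.neg C hC (fun ω => by rw [abs_neg]; exact hYb' ω)
      (fun x => 1 - e x) (measurable_const.sub he) ε hε hqlow hqup hVe0
      (fun x => -(m0 x)) hm0.neg
      (fun g hg hb => by
        simp only [neg_mul, integral_neg]
        rw [hm0v' g hg hb])
    filter_upwards [this] with ω h using h
  have haem1 : ∀ᵐ ω ∂P, |m1 (X ω)| ≤ C + 1 := by
    filter_upwards [b1, b1'] with ω h1 h2
    rw [abs_le]; exact ⟨by linarith, h1⟩
  have haem0 : ∀ᵐ ω ∂P, |m0 (X ω)| ≤ C + 1 := by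
    filter_upwards [b0, b0'] with ω h1 h2
    rw [abs_le]; exact ⟨by linarith, h1⟩
  -- truncations
  set m1' : S → ℝ := fun x => max (-(C + 1)) (min (C + 1) (m1 x)) with hm1'def
  set m0' : S → ℝ := fun x => max (-(C + 1)) (min (C + 1) (m0 x)) with hm0'def
  have hm1'meas : Measurable m1' := measurable_const.max (measurable_const.min hm1)
  have hm0'meas : Measurable m0' := measurable_const.max (measurable_const.min hm0)
  have hm1'b : ∀ x, |m1' x| ≤ C + 1 := by
    intro x; rw [abs_le]
    exact ⟨le_max_left _ _, max_le (by linarith) (min_le_left _ _)⟩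
  have hm0'b : ∀ x, |m0' x| ≤ C + 1 := by
    intro x; rw [abs_le]
    exact ⟨le_max_left _ _, max_le (by linarith) (min_le_left _ _)⟩
  have heqm1 : ∀ᵐ ω ∂P, m1' (X ω) = m1 (X ω) := by
    filter_upwards [haem1] with ω h
    rw [abs_le] at h
    show max (-(C + 1)) (min (C + 1) (m1 (X ω))) = m1 (X ω)
    rw [min_eq_right h.2, max_eq_right h.1]
  have heqm0 : ∀ᵐ ω ∂P, m0' (X ω) = m0 (X ω) := by
    filter_upwards [haem0] with ω h
    rw [abs_le] at h
    show max (-(C + 1)) (min (C + 1) (m0 (X ω))) = m0 (X ω)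
    rw [min_eq_right h.2, max_eq_right h.1]
  have hm1'v : ∀ g : S → ℝ, Measurable g → (∃ C, ∀ x, |g x| ≤ C) →
      ∫ ω, Y ω * Z ω * g (X ω) ∂P = ∫ ω, m1' (X ω) * Z ω * g (X ω) ∂P := by
    intro g hg hb
    refine (hm1v' g hg hb).trans (integral_congr_ae ?_)
    filter_upwards [heqm1] with ω h
    rw [h]
  have hm0'v : ∀ g : S → ℝ, Measurable g → (∃ C, ∀ x, |g x| ≤ C) →
      ∫ ω, Y ω * (1 - Z ω) * g (X ω) ∂P = ∫ ω, m0' (X ω) * (1 - Z ω) * g (X ω) ∂P := by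
    intro g hg hb
    refine (hm0v' g hg hb).trans (integral_congr_ae ?_)
    filter_upwards [heqm0] with ω h
    rw [h]
  have hmain := main_b P X hX Z Y hZ hY hZ01 C hYb' e he ε hε hebd hVe
    m0' m1' hm0'meas hm1'meas (C + 1) (C + 1) hm0'b hm1'b hm1'v hm0'v
    μ0 μ1 hμ0 hμ1 E0 E1 hE0 hE1
  rw [hmain]
  refine integral_congr_ae ?_
  filter_upwards [heqm1, heqm0] with ω h1 h0
  rw [h1, h0]
end

section
/- (Double robustness of the uncentered influence function for Γ0, correct outcome regression.) Let m_0, m_1 be versions of E[Y | X, Z=0] and E[Y | X, Z=1]. Then for EVERY measurable function π* : S × {0,1} → ℝ with π*(x,z) ≥ ε′ for some ε′ > 0, E[ (2Z−1)/π*(X,Z) · (Y − m_Z(X)) + m_1(X) − m_0(X) ] = Γ0 := E[m1(X) − m0(X)]. In particular the instrument propensity π* may be arbitrarily misspecified. -/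
/-!
With `π*` bounded below, `1 / π*_z` is a bounded measurable function of `X`, so the defining
identity of `m_z` says exactly that `(Y - m_z(X)) 1{Z = z} / π*_z(X)` has mean zero, whatever `π*`
is. The weighted term of the estimator is the difference of these two residuals for `z = 1, 0`,
so only `E[m_1(X) - m_0(X)]` survives. The one analytic point is that `m_z(X) 1{Z = z}` is
integrable, which the defining identity yields by testing against truncations of `sign ∘ m_z`.
Since `m_1(X) - m_0(X)` itself need not be integrable (`m_z` is only pinned down on `{Z = z}`),
its integral cannot be split off; but adding an integrable function of mean zero never changes a
Bochner integral, junk value included.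
-/

open MeasureTheory ProbabilityTheory

theorem integral_add_eq_of_integral_eq_zero {α : Type*} [MeasurableSpace α] {μ : Measure α}
    {f g : α → ℝ} (hf : Integrable f μ) (hf0 : ∫ x, f x ∂μ = 0) :
    ∫ x, f x + g x ∂μ = ∫ x, g x ∂μ := by
  by_cases hg : Integrable g μ
  · rw [integral_add hf hg, hf0, zero_add]
  · rw [integral_undef hg, integral_undef ((integrable_add_iff_integrable_right' hf).not.mpr hg)]

section

variable {Ω S : Type*} [MeasurableSpace Ω] [MeasurableSpace S] {P : Measure Ω} {X : Ω → S}

theorem setLIntegral_enorm_comp_mul_le_of_integral_mul_comp_eq {f w : Ω → ℝ} {m : S → ℝ}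
    (hX : Measurable X) (hm : Measurable m) (hf : Integrable f P) (hw : Integrable w P)
    (hw0 : 0 ≤ w)
    (h : ∀ g : S → ℝ, Measurable g → (∃ C, ∀ x, |g x| ≤ C) →
      ∫ ω, f ω * g (X ω) ∂P = ∫ ω, m (X ω) * w ω * g (X ω) ∂P) (n : ℕ) :
    ∫⁻ ω in X ⁻¹' {x | |m x| ≤ n}, ‖m (X ω) * w ω‖ₑ ∂P
      ≤ ENNReal.ofReal (∫ ω, |f ω| ∂P) := by
  set A : Set S := {x | |m x| ≤ n}
  have hA : MeasurableSet A := measurableSet_le hm.abs measurable_const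
  set g : S → ℝ := A.indicator fun x => if 0 ≤ m x then 1 else -1
  have hg : Measurable g :=
    (Measurable.ite (measurableSet_le measurable_const hm) measurable_const
      measurable_const).indicator hA
  have hgb : ∀ x, |g x| ≤ 1 := fun x => by
    by_cases hx : x ∈ A
    · simp only [g, Set.indicator_of_mem hx]
      split_ifs <;> simp
    · simp [g, Set.indicator_of_notMem hx]
  have hint : IntegrableOn (fun ω => m (X ω) * w ω) (X ⁻¹' A) P := by
    refine Integrable.mono' (hw.integrableOn.const_mul n)
      ((hm.comp hX).aestronglyMeasurable.mul hw.aestronglyMeasurable).restrict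
      (ae_restrict_of_forall_mem (hX hA) fun ω hω => ?_)
    rw [Real.norm_eq_abs, abs_mul, abs_of_nonneg (hw0 ω)]
    exact mul_le_mul_of_nonneg_right hω (hw0 ω)
  rw [← ofReal_integral_norm_eq_lintegral_enorm hint]
  gcongr
  calc ∫ ω in X ⁻¹' A, ‖m (X ω) * w ω‖ ∂P = ∫ ω, m (X ω) * w ω * g (X ω) ∂P := by
        rw [← integral_indicator (hX hA)]
        congr 1
        ext ω
        dsimp only [g]
        by_cases hω : X ω ∈ A
        · rw [Set.indicator_of_mem (show ω ∈ X ⁻¹' A from hω), Set.indicator_of_mem hω,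
            Real.norm_eq_abs, abs_mul, abs_of_nonneg (hw0 ω)]
          split_ifs with hm0
          · rw [abs_of_nonneg hm0]; ring
          · rw [abs_of_neg (not_le.mp hm0)]; ring
        · rw [Set.indicator_of_notMem (show ω ∉ X ⁻¹' A from hω),
            Set.indicator_of_notMem hω, mul_zero]
    _ = ∫ ω, f ω * g (X ω) ∂P := (h g hg ⟨1, hgb⟩).symm
    _ ≤ ∫ ω, |f ω| ∂P := by
        refine integral_mono (hf.mul_bdd (hg.comp hX).aestronglyMeasurable
          (ae_of_all _ fun ω => hgb (X ω))) hf.abs fun ω => ?_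
        calc f ω * g (X ω) ≤ |f ω| * |g (X ω)| := (le_abs_self _).trans_eq (abs_mul _ _)
          _ ≤ |f ω| := mul_le_of_le_one_right (abs_nonneg _) (hgb _)

theorem integrable_comp_mul_of_integral_mul_comp_eq {f w : Ω → ℝ} {m : S → ℝ}
    (hX : Measurable X) (hm : Measurable m) (hf : Integrable f P) (hw : Integrable w P)
    (hw0 : 0 ≤ w)
    (h : ∀ g : S → ℝ, Measurable g → (∃ C, ∀ x, |g x| ≤ C) →
      ∫ ω, f ω * g (X ω) ∂P = ∫ ω, m (X ω) * w ω * g (X ω) ∂P) :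
    Integrable (fun ω => m (X ω) * w ω) P := by
  refine ⟨(hm.comp hX).aestronglyMeasurable.mul hw.aestronglyMeasurable, ?_⟩
  have hcover : (⋃ n : ℕ, X ⁻¹' {x | |m x| ≤ n}) = Set.univ :=
    Set.eq_univ_of_forall fun ω => Set.mem_iUnion.mpr (exists_nat_ge |m (X ω)|)
  have hdir : Directed (· ⊆ ·) fun n : ℕ => X ⁻¹' {x | |m x| ≤ n} :=
    Monotone.directed_le fun i j hij ω (hω : |m (X ω)| ≤ i) =>
      hω.trans (Nat.cast_le.mpr hij)
  calc ∫⁻ ω, ‖m (X ω) * w ω‖ₑ ∂P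
      = ⨆ n : ℕ, ∫⁻ ω in X ⁻¹' {x | |m x| ≤ n}, ‖m (X ω) * w ω‖ₑ ∂P := by
        rw [← setLIntegral_iUnion_of_directed _ hdir, hcover, Measure.restrict_univ]
    _ < ⊤ := lt_of_le_of_lt
        (iSup_le (setLIntegral_enorm_comp_mul_le_of_integral_mul_comp_eq hX hm hf hw hw0 h))
        ENNReal.ofReal_lt_top

def IsCondExpVersion (P : Measure Ω) (X : Ω → S) (Z Y : Ω → ℝ) (z : ℝ) (m : S → ℝ) : Prop :=
  ∀ g : S → ℝ, Measurable g → (∃ C, ∀ x, |g x| ≤ C) →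
    ∫ ω, Y ω * (if Z ω = z then (1:ℝ) else 0) * g (X ω) ∂P
      = ∫ ω, m (X ω) * (if Z ω = z then (1:ℝ) else 0) * g (X ω) ∂P

theorem integrable_ite_eq [IsFiniteMeasure P] {Z : Ω → ℝ} (hZ : Measurable Z) (z : ℝ) :
    Integrable (fun ω => if Z ω = z then (1:ℝ) else 0) P :=
  .of_bound (Measurable.ite (hZ (measurableSet_singleton z)) measurable_const
    measurable_const).aestronglyMeasurable 1 (ae_of_all _ fun ω => by split_ifs <;> simp)

theorem integrable_mul_ite_of_abs_le [IsFiniteMeasure P] {Y Z : Ω → ℝ} (hY : Measurable Y)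
    (hZ : Measurable Z) (hYb : ∃ C, ∀ ω, |Y ω| ≤ C) (z : ℝ) :
    Integrable (fun ω => Y ω * (if Z ω = z then (1:ℝ) else 0)) P :=
  let ⟨_, hC⟩ := hYb
  (integrable_ite_eq hZ z).bdd_mul hY.aestronglyMeasurable (ae_of_all _ hC)

namespace IsCondExpVersion

variable [IsFiniteMeasure P] {Z Y : Ω → ℝ} {z : ℝ} {m g : S → ℝ}

theorem integrable_comp_mul_ite (hX : Measurable X) (hZ : Measurable Z)
    (hY : Measurable Y) (hYb : ∃ C, ∀ ω, |Y ω| ≤ C) (hm : Measurable m)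
    (h : IsCondExpVersion P X Z Y z m) :
    Integrable (fun ω => m (X ω) * (if Z ω = z then (1:ℝ) else 0)) P :=
  integrable_comp_mul_of_integral_mul_comp_eq hX hm (integrable_mul_ite_of_abs_le hY hZ hYb z)
    (integrable_ite_eq hZ z) (fun ω => by dsimp only; split_ifs <;> norm_num) h

theorem integrable_residual_mul (hX : Measurable X) (hZ : Measurable Z) (hY : Measurable Y)
    (hYb : ∃ C, ∀ ω, |Y ω| ≤ C) (hm : Measurable m) (h : IsCondExpVersion P X Z Y z m)
    (hg : Measurable g) (hgb : ∃ C, ∀ x, |g x| ≤ C) :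
    Integrable (fun ω => (Y ω - m (X ω)) * (if Z ω = z then (1:ℝ) else 0) * g (X ω)) P := by
  obtain ⟨C, hC⟩ := hgb
  have hres : Integrable (fun ω => (Y ω - m (X ω)) * (if Z ω = z then (1:ℝ) else 0)) P := by
    simpa only [sub_mul] using
      (integrable_mul_ite_of_abs_le hY hZ hYb z).sub' (h.integrable_comp_mul_ite hX hZ hY hYb hm)
  exact hres.mul_bdd (hg.comp hX).aestronglyMeasurable (ae_of_all _ fun ω => hC (X ω))

theorem integral_residual_mul_eq_zero (hX : Measurable X) (hZ : Measurable Z)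
    (hY : Measurable Y) (hYb : ∃ C, ∀ ω, |Y ω| ≤ C) (hm : Measurable m)
    (h : IsCondExpVersion P X Z Y z m) (hg : Measurable g) (hgb : ∃ C, ∀ x, |g x| ≤ C) :
    ∫ ω, (Y ω - m (X ω)) * (if Z ω = z then (1:ℝ) else 0) * g (X ω) ∂P = 0 := by
  obtain ⟨C, hC⟩ := hgb
  have hbdd : ∀ᵐ ω ∂P, ‖g (X ω)‖ ≤ C := ae_of_all _ fun ω => hC (X ω)
  simp_rw [sub_mul]
  rw [integral_sub, h g hg ⟨C, hC⟩, sub_self]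
  · exact (integrable_mul_ite_of_abs_le hY hZ hYb z).mul_bdd
      (hg.comp hX).aestronglyMeasurable hbdd
  · exact (h.integrable_comp_mul_ite hX hZ hY hYb hm).mul_bdd
      (hg.comp hX).aestronglyMeasurable hbdd

end IsCondExpVersion

end

/-- double robustness of the uncentered influence function for Γ0, correct
outcome regression: for every measurable π* : S × {0,1} → ℝ (encoded by its sections
π0*, π1*) bounded below by some ε′ > 0,
E[(2Z−1)/π*(X,Z)·(Y − m_Z(X)) + m1(X) − m0(X)] = Γ0 := E[m1(X) − m0(X)]. -/
theorem stmt_8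
    {Ω : Type*} [MeasurableSpace Ω] (P : Measure Ω) [IsProbabilityMeasure P]
    {S : Type*} [mS : MeasurableSpace S]
    (X : Ω → S) (hX : Measurable X)
    (Z Y : Ω → ℝ) (hZ : Measurable Z) (hY : Measurable Y)
    (hZ01 : ∀ ω, Z ω = 0 ∨ Z ω = 1)
    (hYb : ∃ C, ∀ ω, |Y ω| ≤ C)
    (m0 m1 : S → ℝ) (hm0 : Measurable m0) (hm1 : Measurable m1)
    (hm0v : ∀ g : S → ℝ, Measurable g → (∃ C, ∀ x, |g x| ≤ C) →
      ∫ ω, Y ω * (if Z ω = 0 then (1:ℝ) else 0) * g (X ω) ∂P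
        = ∫ ω, m0 (X ω) * (if Z ω = 0 then (1:ℝ) else 0) * g (X ω) ∂P)
    (hm1v : ∀ g : S → ℝ, Measurable g → (∃ C, ∀ x, |g x| ≤ C) →
      ∫ ω, Y ω * (if Z ω = 1 then (1:ℝ) else 0) * g (X ω) ∂P
        = ∫ ω, m1 (X ω) * (if Z ω = 1 then (1:ℝ) else 0) * g (X ω) ∂P) :
    ∀ (π0s π1s : S → ℝ) (ε' : ℝ), Measurable π0s → Measurable π1s → 0 < ε' →
      (∀ x, ε' ≤ π0s x) → (∀ x, ε' ≤ π1s x) →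
      ∫ ω, (2 * Z ω - 1) / (if Z ω = 1 then π1s (X ω) else π0s (X ω))
            * (Y ω - (if Z ω = 1 then m1 (X ω) else m0 (X ω)))
          + (m1 (X ω) - m0 (X ω)) ∂P
        = ∫ ω, m1 (X ω) - m0 (X ω) ∂P := by
  intro π0s π1s ε' hπ0 hπ1 hε hb0 hb1
  have hinv : ∀ π : S → ℝ, Measurable π → (∀ x, ε' ≤ π x) →
      Measurable (fun x => (π x)⁻¹) ∧ ∃ C, ∀ x, |(π x)⁻¹| ≤ C := fun π hπ hπε =>
    ⟨hπ.inv, ε'⁻¹, fun x => by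
      rw [abs_inv, abs_of_pos (hε.trans_le (hπε x))]
      exact inv_anti₀ hε (hπε x)⟩
  obtain ⟨hg1, hg1b⟩ := hinv π1s hπ1 hb1
  obtain ⟨hg0, hg0b⟩ := hinv π0s hπ0 hb0
  have hint1 := IsCondExpVersion.integrable_residual_mul hX hZ hY hYb hm1 hm1v hg1 hg1b
  have hint0 := IsCondExpVersion.integrable_residual_mul hX hZ hY hYb hm0 hm0v hg0 hg0b
  have hzero1 := IsCondExpVersion.integral_residual_mul_eq_zero hX hZ hY hYb hm1 hm1v hg1 hg1b
  have hzero0 := IsCondExpVersion.integral_residual_mul_eq_zero hX hZ hY hYb hm0 hm0v hg0 hg0b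
  have hsplit : ∀ ω, (2 * Z ω - 1) / (if Z ω = 1 then π1s (X ω) else π0s (X ω))
        * (Y ω - (if Z ω = 1 then m1 (X ω) else m0 (X ω))) + (m1 (X ω) - m0 (X ω))
      = ((Y ω - m1 (X ω)) * (if Z ω = 1 then (1:ℝ) else 0) * (π1s (X ω))⁻¹
          - (Y ω - m0 (X ω)) * (if Z ω = 0 then (1:ℝ) else 0) * (π0s (X ω))⁻¹)
        + (m1 (X ω) - m0 (X ω)) := fun ω => by
    rcases hZ01 ω with hz | hz <;> simp only [hz] <;> norm_num <;> ring
  simp_rw [hsplit]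
  exact integral_add_eq_of_integral_eq_zero (hint1.sub' hint0)
    (by rw [integral_sub hint1 hint0, hzero1, hzero0, sub_zero])
end
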